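/- arXiv:2304.11299 — 4 statements merged into one kernel-verified Lean document; each statement's English description precedes it below -/
import Mathlib

section
/- Let p < 0, let v_1, …, v_N ∈ S^{n-1} be in general position in dimension n, let α_1, …, α_N > 0, and let P ∈ 𝒫(v_1,…,v_N). Then the infimum of Φ_p(h_P, ξ) over ξ in the interior of P is attained at a unique point ξ_P in the interior of P; in particular Φ_p(h_P, ·) is strictly convex on the interior of P and tends to +∞ as ξ approaches ∂P. -/
open MeasureTheory Metric Set Filter
open scoped ENNReal NNReal RealInnerProductSpace Pointwise Topology

noncomputable section

/-- Euclidean `n`-space. -/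
abbrev Eucl (n : ℕ) := EuclideanSpace ℝ (Fin n)

/-- The unit sphere `S^{n-1}` in `ℝ^n`. -/
def unitSphere (n : ℕ) : Set (Eucl n) := Metric.sphere (0 : Eucl n) 1

/-- Spherical Lebesgue measure on `S^{n-1}`: `(n-1)`-dimensional Hausdorff measure
restricted to the unit sphere. -/
def sphereMeasure (n : ℕ) : Measure (Eucl n) := (μH[(n : ℝ) - 1]).restrict (unitSphere n)

/-- `ω_n`, the volume of the `n`-dimensional unit ball. -/
def ballVol (n : ℕ) : ℝ := (volume (Metric.closedBall (0 : Eucl n) 1)).toReal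

/-- The support function `h_K(v) = sup {x ⬝ v : x ∈ K}`. -/
def suppFn {n : ℕ} (K : Set (Eucl n)) (v : Eucl n) : ℝ := sSup ((fun x => ⟪x, v⟫) '' K)

/-- The X-ray `X_K(z,u) = |K ∩ (z + ℝ u)|`, the length of the chord of `K` through `z`
in direction `u` (for `u` a unit vector). -/
def xray {n : ℕ} (K : Set (Eucl n)) (z u : Eucl n) : ℝ :=
  (volume {t : ℝ | z + t • u ∈ K}).toReal

/-- The `q`-th dual quermassintegral of `K` with respect to a boundary point `z`,
`Ṽ_q(K,z) = (1/(2n)) ∫_{S^{n-1}} X_K(z,u)^q du`. -/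
def dualQuermass (n : ℕ) (q : ℝ) (K : Set (Eucl n)) (z : Eucl n) : ℝ :=
  (1 / (2 * (n : ℝ))) * ∫ u in unitSphere n, xray K z u ^ q ∂μH[(n : ℝ) - 1]

/-- The `q`-th chord integral
`I_q(K) = (1/(n ω_n)) ∫_{S^{n-1}} ∫_{u^⊥} X_K(x,u)^q dx du`. -/
def chordIntegral (n : ℕ) (q : ℝ) (K : Set (Eucl n)) : ℝ :=
  (1 / ((n : ℝ) * ballVol n)) *
    ∫ u in unitSphere n,
      (∫ x in {x : Eucl n | ⟪x, u⟫ = 0}, xray K x u ^ q ∂μH[(n : ℝ) - 1]) ∂μH[(n : ℝ) - 1]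

/-- A choice of outer unit normal (Gauss map) at a boundary point `z` of `K`; for
`ℋ^{n-1}`-a.e. boundary point of a convex body the outer unit normal is unique, so the
choice is a.e. unambiguous. -/
noncomputable def gaussMap {n : ℕ} (K : Set (Eucl n)) (z : Eucl n) : Eucl n := open Classical in
  if h : ∃ v : Eucl n, ‖v‖ = 1 ∧ ∀ x ∈ K, ⟪x, v⟫ ≤ ⟪z, v⟫ then h.choose else 0

/-- The chord measure `F_q(K,η) = (2q/ω_n) ∫_{ν_K^{-1}(η)} Ṽ_{q-1}(K,z) dℋ^{n-1}(z)`,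
as a Borel measure on `ℝ^n` concentrated on `S^{n-1}`. -/
def chordMeasure (n : ℕ) (q : ℝ) (K : Set (Eucl n)) : Measure (Eucl n) :=
  Measure.map (gaussMap K)
    (((μH[(n : ℝ) - 1] : Measure (Eucl n)).restrict (frontier K)).withDensity
      (fun z => ENNReal.ofReal ((2 * q / ballVol n) * dualQuermass n (q - 1) K z)))

/-- The `L_p` chord measure, `dF_{p,q}(K,v) = h_K(v)^{1-p} dF_q(K,v)`. -/
def lpChordMeasure (n : ℕ) (p q : ℝ) (K : Set (Eucl n)) : Measure (Eucl n) :=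
  (chordMeasure n q K).withDensity (fun v => ENNReal.ofReal (suppFn K v ^ (1 - p)))

/-- A convex body: a compact convex set with nonempty interior. -/
def IsConvexBody {n : ℕ} (K : Set (Eucl n)) : Prop :=
  Convex ℝ K ∧ IsCompact K ∧ (interior K).Nonempty

/-- The unit vectors `v 0, …, v (N-1)` are in general position in dimension `n`:
they are not contained in any closed hemisphere and any `n` of them are linearly
independent. -/
def InGenPos (n N : ℕ) (v : Fin N → Eucl n) : Prop :=
  (∀ i, ‖v i‖ = 1) ∧
  (∀ w : Eucl n, w ≠ 0 → ∃ i, ⟪v i, w⟫ < 0) ∧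
  (∀ s : Finset (Fin N), s.card = n → LinearIndependent ℝ (fun i : s => v (i : Fin N)))

/-- `P ∈ 𝒫(v_1,…,v_N)`: `P` is a (nonempty, compact, convex) polytope with
`P = ∩_{i} {x : x·v_i ≤ h_P(v_i)}`. -/
def MemPolyClass {n N : ℕ} (v : Fin N → Eucl n) (P : Set (Eucl n)) : Prop :=
  P.Nonempty ∧ IsCompact P ∧ Convex ℝ P ∧
    P = ⋂ i, {x : Eucl n | ⟪x, v i⟫ ≤ suppFn P (v i)}

/-- `Φ_p(h_P, ξ) = -(1/p) Σ_i α_i (h_P(v_i) - ξ·v_i)^p`. -/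
def PhiP {n N : ℕ} (p : ℝ) (α : Fin N → ℝ) (v : Fin N → Eucl n) (P : Set (Eucl n))
    (ξ : Eucl n) : ℝ :=
  -(1 / p) * ∑ i, α i * (suppFn P (v i) - ⟪ξ, v i⟫) ^ p

/-- `x ↦ x^p` is strictly convex on `(0,∞)` for `p < 0`. -/
lemma aux_strictConvexOn_rpow_neg {p : ℝ} (hp : p < 0) :
    StrictConvexOn ℝ (Set.Ioi (0:ℝ)) (fun x : ℝ => x ^ p) := by
  apply strictConvexOn_of_deriv2_pos (convex_Ioi 0)
  · intro x hx
    exact (Real.continuousAt_rpow_const x p (Or.inl (ne_of_gt hx))).continuousWithinAt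
  · intro x hx
    rw [interior_Ioi] at hx
    have h1 : deriv (fun y : ℝ => y ^ p) =ᶠ[𝓝 x] fun y => p * y ^ (p - 1) := by
      filter_upwards [eventually_ne_nhds (ne_of_gt hx)] with y hy
      exact Real.deriv_rpow_const y p
    have h2 : deriv^[2] (fun y : ℝ => y ^ p) x
        = deriv (fun y : ℝ => p * y ^ (p - 1)) x := by
      show deriv (deriv (fun y : ℝ => y ^ p)) x = _
      exact Filter.EventuallyEq.deriv_eq h1
    have h3 : HasDerivAt (fun y : ℝ => y ^ (p - 1)) ((p - 1) * x ^ (p - 1 - 1)) x :=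
      Real.hasDerivAt_rpow_const (Or.inl (ne_of_gt hx))
    have h4 : deriv (fun y : ℝ => p * y ^ (p - 1)) x = p * ((p - 1) * x ^ (p - 1 - 1)) :=
      (h3.const_mul p).deriv
    rw [h2, h4]
    have hxp : (0:ℝ) < x ^ (p - 1 - 1) := Real.rpow_pos_of_pos hx _
    nlinarith [mul_pos (mul_pos_of_neg_of_neg hp (show p - 1 < 0 by linarith)) hxp]

/-- `Φ_p(h_P, ·)` has a unique minimizer in the interior of `P`; it is strictly convex
on the interior and tends to `+∞` at the boundary. -/
theorem phi_unique_minimizer (n N : ℕ) (hn : 2 ≤ n) (p : ℝ) (hp : p < 0)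
    (v : Fin N → Eucl n) (hgp : InGenPos n N v) (α : Fin N → ℝ) (hα : ∀ i, 0 < α i)
    (P : Set (Eucl n)) (hP : MemPolyClass v P) (hPint : (interior P).Nonempty) :
    (∃! ξ : Eucl n, ξ ∈ interior P ∧
        ∀ η ∈ interior P, PhiP p α v P ξ ≤ PhiP p α v P η) ∧
    StrictConvexOn ℝ (interior P) (PhiP p α v P) ∧
    (∀ (ξs : ℕ → Eucl n) (ξ₀ : Eucl n), (∀ k, ξs k ∈ interior P) →
        Filter.Tendsto ξs Filter.atTop (𝓝 ξ₀) → ξ₀ ∈ frontier P →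
        Filter.Tendsto (fun k => PhiP p α v P (ξs k)) Filter.atTop Filter.atTop) := by
  obtain ⟨hPne, hPcomp, hPconv, hPeq⟩ := hP
  have hc0 : (0:ℝ) < -(1/p) := by
    have : 1/p < 0 := div_neg_of_pos_of_neg one_pos hp
    linarith
  have hcontinner : ∀ i, Continuous (fun x : Eucl n => ⟪x, v i⟫) := fun i =>
    continuous_id.inner continuous_const
  -- membership bound
  have hmemle : ∀ i, ∀ x ∈ P, ⟪x, v i⟫ ≤ suppFn P (v i) := by
    intro i x hx
    have hcomp : IsCompact ((fun x : Eucl n => ⟪x, v i⟫) '' P) := hPcomp.image (hcontinner i)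
    exact le_csSup hcomp.bddAbove ⟨x, hx, rfl⟩
  -- strict inequality in the interior
  have hintlt : ∀ i, ∀ x ∈ interior P, ⟪x, v i⟫ < suppFn P (v i) := by
    intro i x hx
    obtain ⟨ε, hε, hball⟩ := Metric.isOpen_iff.1 isOpen_interior x hx
    have hmemb : x + (ε/2) • v i ∈ Metric.ball x ε := by
      rw [Metric.mem_ball, dist_eq_norm]
      have : x + (ε/2) • v i - x = (ε/2) • v i := by abel
      rw [this, norm_smul, hgp.1 i]
      simp only [Real.norm_eq_abs, mul_one]
      rw [abs_of_pos (by linarith)]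
      linarith
    have hmem : x + (ε/2) • v i ∈ P := interior_subset (hball hmemb)
    have hle := hmemle i _ hmem
    rw [inner_add_left, real_inner_smul_left] at hle
    have hvv : ⟪v i, v i⟫ = (1:ℝ) := by
      rw [real_inner_self_eq_norm_sq, hgp.1 i]; norm_num
    rw [hvv] at hle
    linarith
  have hfpos : ∀ i, ∀ x ∈ interior P, 0 < suppFn P (v i) - ⟪x, v i⟫ :=
    fun i x hx => sub_pos.2 (hintlt i x hx)
  -- boundary points satisfy some equality
  have hfront : ∀ z ∈ frontier P, ∃ i, ⟪z, v i⟫ = suppFn P (v i) := by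
    intro z hz
    have hzP : z ∈ P := by
      have h1 : z ∈ closure P := hz.1
      rwa [hPcomp.isClosed.closure_eq] at h1
    by_contra hcon
    push_neg at hcon
    have hlt : ∀ i, ⟪z, v i⟫ < suppFn P (v i) :=
      fun i => lt_of_le_of_ne (hmemle i z hzP) (hcon i)
    have hU : IsOpen (⋂ i, {x : Eucl n | ⟪x, v i⟫ < suppFn P (v i)}) :=
      isOpen_iInter_of_finite fun i => isOpen_lt (hcontinner i) continuous_const
    have hUP : (⋂ i, {x : Eucl n | ⟪x, v i⟫ < suppFn P (v i)}) ⊆ P := by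
      intro x hx
      rw [hPeq]
      exact Set.mem_iInter.2 fun i =>
        show ⟪x, v i⟫ ≤ suppFn P (v i) from le_of_lt (Set.mem_iInter.1 hx i)
    have hzint : z ∈ interior P :=
      interior_maximal hUP hU (Set.mem_iInter.2 fun i => hlt i)
    exact hz.2 hzint
  -- spanning
  have hspan : ∀ d : Eucl n, d ≠ 0 → ∃ i, ⟪d, v i⟫ ≠ 0 := by
    intro d hd
    obtain ⟨i, hi⟩ := hgp.2.1 d hd
    exact ⟨i, by rw [real_inner_comm]; exact ne_of_lt hi⟩
  have hA := aux_strictConvexOn_rpow_neg hp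
  -- strict convexity
  have hIc : Convex ℝ (interior P) := hPconv.interior
  have hconvex : StrictConvexOn ℝ (interior P) (PhiP p α v P) := by
    refine ⟨hIc, ?_⟩
    intro ξ hξ η hη hne a b ha hb hab
    have hmem : a • ξ + b • η ∈ interior P := hIc hξ hη ha.le hb.le hab
    have hfa : ∀ i, suppFn P (v i) - ⟪a • ξ + b • η, v i⟫
        = a * (suppFn P (v i) - ⟪ξ, v i⟫) + b * (suppFn P (v i) - ⟪η, v i⟫) := by
      intro i
      rw [inner_add_left, real_inner_smul_left, real_inner_smul_left]
      linear_combination (-(suppFn P (v i))) * hab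
    have hsum : ∑ i, α i * (suppFn P (v i) - ⟪a • ξ + b • η, v i⟫) ^ p
        < ∑ i, (a * (α i * (suppFn P (v i) - ⟪ξ, v i⟫) ^ p)
            + b * (α i * (suppFn P (v i) - ⟪η, v i⟫) ^ p)) := by
      obtain ⟨i0, hi0⟩ := hspan (ξ - η) (sub_ne_zero.2 hne)
      have hi0' : suppFn P (v i0) - ⟪ξ, v i0⟫ ≠ suppFn P (v i0) - ⟪η, v i0⟫ := by
        rw [inner_sub_left] at hi0
        intro hcontra
        apply hi0
        linarith
      refine Finset.sum_lt_sum (fun i _ => ?_) ⟨i0, Finset.mem_univ i0, ?_⟩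
      · have hle : (a * (suppFn P (v i) - ⟪ξ, v i⟫) + b * (suppFn P (v i) - ⟪η, v i⟫)) ^ p
            ≤ a * (suppFn P (v i) - ⟪ξ, v i⟫) ^ p + b * (suppFn P (v i) - ⟪η, v i⟫) ^ p :=
          hA.convexOn.2 (hfpos i ξ hξ) (hfpos i η hη) ha.le hb.le hab
        rw [hfa i]
        calc α i * (a * (suppFn P (v i) - ⟪ξ, v i⟫) + b * (suppFn P (v i) - ⟪η, v i⟫)) ^ p
            ≤ α i * (a * (suppFn P (v i) - ⟪ξ, v i⟫) ^ p
              + b * (suppFn P (v i) - ⟪η, v i⟫) ^ p) :=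
              mul_le_mul_of_nonneg_left hle (hα i).le
          _ = a * (α i * (suppFn P (v i) - ⟪ξ, v i⟫) ^ p)
              + b * (α i * (suppFn P (v i) - ⟪η, v i⟫) ^ p) := by ring
      · have hlt : (a * (suppFn P (v i0) - ⟪ξ, v i0⟫) + b * (suppFn P (v i0) - ⟪η, v i0⟫)) ^ p
            < a * (suppFn P (v i0) - ⟪ξ, v i0⟫) ^ p + b * (suppFn P (v i0) - ⟪η, v i0⟫) ^ p :=
          hA.2 (hfpos i0 ξ hξ) (hfpos i0 η hη) hi0' ha hb hab
        rw [hfa i0]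
        calc α i0 * (a * (suppFn P (v i0) - ⟪ξ, v i0⟫) + b * (suppFn P (v i0) - ⟪η, v i0⟫)) ^ p
            < α i0 * (a * (suppFn P (v i0) - ⟪ξ, v i0⟫) ^ p
              + b * (suppFn P (v i0) - ⟪η, v i0⟫) ^ p) :=
              mul_lt_mul_of_pos_left hlt (hα i0)
          _ = a * (α i0 * (suppFn P (v i0) - ⟪ξ, v i0⟫) ^ p)
              + b * (α i0 * (suppFn P (v i0) - ⟪η, v i0⟫) ^ p) := by ring
    unfold PhiP
    rw [Finset.sum_add_distrib, ← Finset.mul_sum, ← Finset.mul_sum] at hsum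
    calc -(1/p) * ∑ i, α i * (suppFn P (v i) - ⟪a • ξ + b • η, v i⟫) ^ p
        < -(1/p) * (a * ∑ i, α i * (suppFn P (v i) - ⟪ξ, v i⟫) ^ p
            + b * ∑ i, α i * (suppFn P (v i) - ⟪η, v i⟫) ^ p) :=
          mul_lt_mul_of_pos_left hsum hc0
      _ = a • (-(1/p) * ∑ i, α i * (suppFn P (v i) - ⟪ξ, v i⟫) ^ p)
          + b • (-(1/p) * ∑ i, α i * (suppFn P (v i) - ⟪η, v i⟫) ^ p) := by
          simp only [smul_eq_mul]; ring
  -- blow-up at the boundary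
  have hblow : ∀ (ξs : ℕ → Eucl n) (ξ₀ : Eucl n), (∀ k, ξs k ∈ interior P) →
      Filter.Tendsto ξs Filter.atTop (𝓝 ξ₀) → ξ₀ ∈ frontier P →
      Filter.Tendsto (fun k => PhiP p α v P (ξs k)) Filter.atTop Filter.atTop := by
    intro ξs ξ₀ hin hlim hfr
    obtain ⟨i0, hi0⟩ := hfront ξ₀ hfr
    set g : ℕ → ℝ := fun k => suppFn P (v i0) - ⟪ξs k, v i0⟫ with hg
    have hgpos : ∀ k, 0 < g k := fun k => hfpos i0 _ (hin k)
    have hgl : Tendsto g atTop (𝓝 0) := by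
      have h1 : Tendsto (fun k => ⟪ξs k, v i0⟫) atTop (𝓝 ⟪ξ₀, v i0⟫) :=
        ((hcontinner i0).tendsto ξ₀).comp hlim
      have h2 : Tendsto (fun k => suppFn P (v i0) - ⟪ξs k, v i0⟫) atTop
          (𝓝 (suppFn P (v i0) - ⟪ξ₀, v i0⟫)) := tendsto_const_nhds.sub h1
      rw [hi0, sub_self] at h2
      exact h2
    have hq : 0 < -p := neg_pos.2 hp
    have hgp' : Tendsto (fun k => (g k) ^ p) atTop atTop := by
      have h1 : Tendsto (fun k => (g k) ^ (-p)) atTop (𝓝[>] 0) := by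
        apply tendsto_nhdsWithin_of_tendsto_nhds_of_eventually_within
        · have hc : ContinuousAt (fun t : ℝ => t ^ (-p)) 0 :=
            Real.continuousAt_rpow_const 0 (-p) (Or.inr hq.le)
          have h2 := hc.tendsto.comp hgl
          rw [Function.comp_def] at h2
          simpa [Real.zero_rpow (ne_of_gt hq)] using h2
        · exact Eventually.of_forall fun k => Real.rpow_pos_of_pos (hgpos k) _
      have h3 := h1.inv_tendsto_nhdsGT_zero
      refine h3.congr fun k => ?_
      simp only [Pi.inv_apply]
      rw [← Real.rpow_neg (hgpos k).le, neg_neg]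
    have hlow : ∀ k, (-(1/p) * α i0) * (g k) ^ p ≤ PhiP p α v P (ξs k) := by
      intro k
      have hterm : α i0 * (g k) ^ p
          ≤ ∑ i, α i * (suppFn P (v i) - ⟪ξs k, v i⟫) ^ p :=
        Finset.single_le_sum
          (fun i _ => mul_nonneg (hα i).le
            (Real.rpow_pos_of_pos (hfpos i _ (hin k)) p).le)
          (Finset.mem_univ i0)
      calc (-(1/p) * α i0) * (g k) ^ p = -(1/p) * (α i0 * (g k) ^ p) := by ring
        _ ≤ -(1/p) * ∑ i, α i * (suppFn P (v i) - ⟪ξs k, v i⟫) ^ p :=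
            mul_le_mul_of_nonneg_left hterm hc0.le
        _ = PhiP p α v P (ξs k) := rfl
    have hCpos : 0 < -(1/p) * α i0 := mul_pos hc0 (hα i0)
    exact tendsto_atTop_mono hlow (hgp'.const_mul_atTop hCpos)
  -- continuity on the interior
  have hcont : ∀ x ∈ interior P, ContinuousAt (PhiP p α v P) x := by
    intro x hx
    unfold PhiP
    apply ContinuousAt.mul continuousAt_const
    apply tendsto_finset_sum
    intro i _
    have hf : ContinuousAt (fun ξ : Eucl n => suppFn P (v i) - ⟪ξ, v i⟫) x :=
      continuousAt_const.sub (hcontinner i).continuousAt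
    have hcomp : ContinuousAt (fun ξ : Eucl n => (suppFn P (v i) - ⟪ξ, v i⟫) ^ p) x :=
      (Real.continuousAt_rpow_const (suppFn P (v i) - ⟪x, v i⟫) p
        (Or.inl (ne_of_gt (hfpos i x hx)))).tendsto.comp hf
    exact Filter.Tendsto.const_mul _ hcomp
  -- existence of minimizer
  obtain ⟨ξstar, hξstar⟩ := hPint
  set c := PhiP p α v P ξstar with hc
  set S := {x ∈ interior P | PhiP p α v P x ≤ c} with hS
  have hSsub : S ⊆ interior P := fun x hx => hx.1
  have hSne : S.Nonempty := ⟨ξstar, hξstar, le_refl c⟩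
  have hSclosed : IsClosed S := by
    apply IsSeqClosed.isClosed
    intro xs x₀ hxs hxl
    have hxint : ∀ k, xs k ∈ interior P := fun k => (hxs k).1
    have hx₀P : x₀ ∈ P := by
      have h1 : x₀ ∈ closure P :=
        mem_closure_of_tendsto hxl (Eventually.of_forall fun k => interior_subset (hxint k))
      rwa [hPcomp.isClosed.closure_eq] at h1
    have hx₀int : x₀ ∈ interior P := by
      by_contra hni
      have hfr : x₀ ∈ frontier P := ⟨subset_closure hx₀P, hni⟩
      obtain ⟨k, hk⟩ := ((hblow xs x₀ hxint hxl hfr).eventually_gt_atTop c).exists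
      exact absurd (hxs k).2 (not_le.2 hk)
    refine ⟨hx₀int, ?_⟩
    exact le_of_tendsto (((hcont x₀ hx₀int).tendsto).comp hxl)
      (Eventually.of_forall fun k => (hxs k).2)
  have hSbdd : Bornology.IsBounded S :=
    hPcomp.isBounded.subset fun x hx => interior_subset hx.1
  have hScomp : IsCompact S := Metric.isCompact_of_isClosed_isBounded hSclosed hSbdd
  obtain ⟨ξmin, hξminS, hmin⟩ := hScomp.exists_isMinOn hSne
    (fun x hx => (hcont x (hSsub hx)).continuousWithinAt)
  have hglobal : ∀ η ∈ interior P, PhiP p α v P ξmin ≤ PhiP p α v P η := by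
    intro η hη
    by_cases hcle : PhiP p α v P η ≤ c
    · exact hmin ⟨hη, hcle⟩
    · exact le_trans (hmin ⟨hξstar, le_refl c⟩) (le_of_lt (not_le.1 hcle))
  refine ⟨⟨ξmin, ⟨hSsub hξminS, hglobal⟩, ?_⟩, hconvex, hblow⟩
  rintro ξ' ⟨hξ'int, hξ'min⟩
  by_contra hne
  have hmint : (1/2 : ℝ) • ξ' + (1/2 : ℝ) • ξmin ∈ interior P :=
    hIc hξ'int (hSsub hξminS) (by norm_num) (by norm_num) (by norm_num)
  have hlt := hconvex.2 hξ'int (hSsub hξminS) hne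
    (by norm_num : (0:ℝ) < 1/2) (by norm_num : (0:ℝ) < 1/2) (by norm_num)
  have h1 := hξ'min _ hmint
  have h2 : PhiP p α v P ξmin = PhiP p α v P ξ' :=
    le_antisymm (hglobal ξ' hξ'int) (hξ'min ξmin (hSsub hξminS))
  simp only [smul_eq_mul] at hlt
  linarith

end
end

section
/- Let p < 0, let v_1, …, v_N ∈ S^{n-1} be in general position in dimension n, and let α_1, …, α_N > 0. If P_i ∈ 𝒫(v_1,…,v_N) and P_i converges (in Hausdorff distance) to a polytope P with nonempty interior, then ξ_{P_i} → ξ_P and Φ_p(h_{P_i}, ξ_{P_i}) → Φ_p(h_P, ξ_P), where ξ_Q denotes the unique minimizer of Φ_p(h_Q, ·) over the interior of Q. -/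
open MeasureTheory Metric Set Filter
open scoped ENNReal NNReal RealInnerProductSpace Pointwise Topology

noncomputable section

section Helpers
variable {n : ℕ}

lemma inner_le_suppFn {K : Set (Eucl n)} (hK : IsCompact K) {x : Eucl n} (u : Eucl n)
    (hx : x ∈ K) : ⟪x, u⟫ ≤ suppFn K u :=
  le_csSup ((hK.image (continuous_id.inner continuous_const)).bddAbove) ⟨x, hx, rfl⟩

lemma suppFn_le {K : Set (Eucl n)} (hne : K.Nonempty) {u : Eucl n} {c : ℝ}
    (h : ∀ x ∈ K, ⟪x, u⟫ ≤ c) : suppFn K u ≤ c :=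
  csSup_le (hne.image _) (by rintro _ ⟨x, hx, rfl⟩; exact h x hx)

lemma suppFn_le_add {A B : Set (Eucl n)} (hA : A.Nonempty) (hAc : IsCompact A)
    (hB : B.Nonempty) (hBc : IsCompact B) {u : Eucl n} (hu : ‖u‖ = 1) {d : ℝ}
    (hd : Metric.hausdorffDist A B < d) : suppFn A u ≤ suppFn B u + d := by
  refine suppFn_le hA fun x hx => ?_
  obtain ⟨y, hy, hxy⟩ := Metric.exists_dist_lt_of_hausdorffDist_lt hx hd
    (Metric.hausdorffEdist_ne_top_of_nonempty_of_bounded hA hB hAc.isBounded hBc.isBounded)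
  have h1 : ⟪x, u⟫ - ⟪y, u⟫ ≤ ‖x - y‖ * ‖u‖ := by
    rw [← inner_sub_left]; exact real_inner_le_norm _ _
  have h2 : ⟪y, u⟫ ≤ suppFn B u := inner_le_suppFn hBc u hy
  rw [hu, mul_one] at h1
  rw [dist_eq_norm] at hxy
  linarith

lemma interior_gap {K : Set (Eucl n)} (hK : IsCompact K) {x : Eucl n}
    (hx : x ∈ interior K) {u : Eucl n} (hu : ‖u‖ = 1) :
    ∃ r > 0, ⟪x, u⟫ + r ≤ suppFn K u := by
  obtain ⟨s, hs, hball⟩ := Metric.isOpen_iff.1 isOpen_interior x hx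
  refine ⟨s / 2, by linarith, ?_⟩
  have hmem : x + (s / 2) • u ∈ K := by
    refine interior_subset (hball ?_)
    rw [Metric.mem_ball, dist_eq_norm, add_sub_cancel_left, norm_smul, hu, mul_one,
      Real.norm_eq_abs, abs_of_pos (by linarith)]
    linarith
  have h := inner_le_suppFn hK u hmem
  rw [inner_add_left, real_inner_smul_left, real_inner_self_eq_norm_mul_norm, hu] at h
  linarith

lemma rpow_midpoint_lt {p a b : ℝ} (hp : p < 0) (ha : 0 < a) (hb : 0 < b) (hab : a ≠ b) :
    ((a + b) / 2) ^ p < (a ^ p + b ^ p) / 2 := by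
  have hm : 0 < (a + b) / 2 := by linarith
  have hmemA : a ∈ Set.Ioi (0:ℝ) := ha
  have hmemB : b ∈ Set.Ioi (0:ℝ) := hb
  have hlog := strictConcaveOn_log_Ioi.2 hmemA hmemB hab
    (by norm_num : (0:ℝ) < 1/2) (by norm_num : (0:ℝ) < 1/2) (by norm_num)
  simp only [smul_eq_mul] at hlog
  have hmid : (1/2 : ℝ) * a + (1/2 : ℝ) * b = (a + b) / 2 := by ring
  rw [hmid] at hlog
  rw [Real.rpow_def_of_pos hm, Real.rpow_def_of_pos ha, Real.rpow_def_of_pos hb]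
  have key : Real.log ((a + b) / 2) * p < ((Real.log a * p) + (Real.log b * p)) / 2 := by
    nlinarith [mul_lt_mul_of_neg_right hlog hp]
  have hexp := Real.exp_lt_exp.2 key
  have hconv := convexOn_exp.2 (Set.mem_univ (Real.log a * p)) (Set.mem_univ (Real.log b * p))
    (by norm_num : (0:ℝ) ≤ 1/2) (by norm_num : (0:ℝ) ≤ 1/2) (by norm_num)
  simp only [smul_eq_mul] at hconv
  have heq : (1/2:ℝ) * (Real.log a * p) + (1/2:ℝ) * (Real.log b * p)
      = (Real.log a * p + Real.log b * p) / 2 := by ring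
  rw [heq] at hconv
  linarith

lemma rpow_midpoint_le {p a b : ℝ} (hp : p < 0) (ha : 0 < a) (hb : 0 < b) :
    ((a + b) / 2) ^ p ≤ (a ^ p + b ^ p) / 2 := by
  rcases eq_or_ne a b with rfl | hab
  · rw [add_self_div_two, add_self_div_two]
  · exact (rpow_midpoint_lt hp ha hb hab).le

lemma tendsto_rpow_atTop_of_tendsto_zero {p : ℝ} (hp : p < 0) {f : ℕ → ℝ}
    (hf : Filter.Tendsto f Filter.atTop (𝓝 0)) (hfpos : ∀ᶠ k in Filter.atTop, 0 < f k) :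
    Filter.Tendsto (fun k => f k ^ p) Filter.atTop Filter.atTop := by
  have h1 : Filter.Tendsto f Filter.atTop (𝓝[>] (0:ℝ)) :=
    tendsto_nhdsWithin_iff.2 ⟨hf, hfpos⟩
  have h2 : Filter.Tendsto (fun t : ℝ => t⁻¹ ^ (-p)) (𝓝[>] (0:ℝ)) Filter.atTop :=
    (tendsto_rpow_atTop (by linarith)).comp tendsto_inv_nhdsGT_zero
  refine (h2.comp h1).congr' ?_
  filter_upwards [hfpos] with k hk
  show (f k)⁻¹ ^ (-p) = f k ^ p
  rw [Real.inv_rpow hk.le, ← Real.rpow_neg hk.le, neg_neg]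

end Helpers

/-- Continuity of the minimizer `ξ_P` and of the minimal value of `Φ_p` along a
Hausdorff-convergent sequence of polytopes in `𝒫(v_1,…,v_N)`. -/
theorem phi_minimizer_continuity (n N : ℕ) (hn : 2 ≤ n) (p : ℝ) (hp : p < 0)
    (v : Fin N → Eucl n) (hgp : InGenPos n N v) (α : Fin N → ℝ) (hα : ∀ i, 0 < α i)
    (Ps : ℕ → Set (Eucl n)) (hPs : ∀ i, MemPolyClass v (Ps i))
    (P : Set (Eucl n)) (hpoly : ∃ S : Finset (Eucl n), P = convexHull ℝ (S : Set (Eucl n)))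
    (hPint : (interior P).Nonempty)
    (hconv : Filter.Tendsto (fun i => Metric.hausdorffDist (Ps i) P) Filter.atTop (𝓝 0))
    (ξs : ℕ → Eucl n)
    (hξs : ∀ i, ξs i ∈ interior (Ps i) ∧
        ∀ η ∈ interior (Ps i), PhiP p α v (Ps i) (ξs i) ≤ PhiP p α v (Ps i) η)
    (ξP : Eucl n)
    (hξP : ξP ∈ interior P ∧ ∀ η ∈ interior P, PhiP p α v P ξP ≤ PhiP p α v P η) :
    Filter.Tendsto ξs Filter.atTop (𝓝 ξP) ∧
      Filter.Tendsto (fun i => PhiP p α v (Ps i) (ξs i)) Filter.atTop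
        (𝓝 (PhiP p α v P ξP)) := by
  classical
  obtain ⟨hnorm, hsep, _hind⟩ := hgp
  obtain ⟨ξPint, ξPmin⟩ := hξP
  have hPcomp : IsCompact P := by
    obtain ⟨S, rfl⟩ := hpoly; exact S.finite_toSet.isCompact_convexHull ℝ
  have hPconv : Convex ℝ P := by
    obtain ⟨S, rfl⟩ := hpoly; exact convex_convexHull ℝ _
  have hPne : P.Nonempty := ⟨ξP, interior_subset ξPint⟩
  have hPclosed : IsClosed P := hPcomp.isClosed
  have hQne : ∀ k, (Ps k).Nonempty := fun k => (hPs k).1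
  have hQcomp : ∀ k, IsCompact (Ps k) := fun k => (hPs k).2.1
  have hedist : ∀ k, EMetric.hausdorffEdist (Ps k) P ≠ ⊤ := fun k =>
    Metric.hausdorffEdist_ne_top_of_nonempty_of_bounded (hQne k) hPne (hQcomp k).isBounded
      hPcomp.isBounded
  have hcpos : 0 < -(1/p) := by
    have : 1/p < 0 := div_neg_of_pos_of_neg one_pos hp
    linarith
  have hdist : ∀ ε : ℝ, 0 < ε → ∀ᶠ k in atTop, Metric.hausdorffDist (Ps k) P < ε :=
    fun ε hε => hconv.eventually (gt_mem_nhds hε)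
  have hsupp : ∀ i : Fin N,
      Tendsto (fun k => suppFn (Ps k) (v i)) atTop (𝓝 (suppFn P (v i))) := by
    intro i
    rw [Metric.tendsto_atTop]
    intro ε hε
    obtain ⟨M, hM⟩ := eventually_atTop.1 (hdist (ε/2) (by linarith))
    refine ⟨M, fun k hk => ?_⟩
    have hd := hM k hk
    have h1 := suppFn_le_add (hQne k) (hQcomp k) hPne hPcomp (hnorm i) hd
    have h2 := suppFn_le_add hPne hPcomp (hQne k) (hQcomp k) (hnorm i)
      (by rwa [Metric.hausdorffDist_comm] at hd)
    rw [Real.dist_eq, abs_sub_lt_iff]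
    constructor <;> linarith
  have hgapP : ∀ i, 0 < suppFn P (v i) - ⟪ξP, v i⟫ := by
    intro i
    obtain ⟨r, hr, h⟩ := interior_gap hPcomp ξPint (hnorm i)
    linarith
  have hgapQ : ∀ k i, 0 < suppFn (Ps k) (v i) - ⟪ξs k, v i⟫ := by
    intro k i
    obtain ⟨r, hr, h⟩ := interior_gap (hQcomp k) (hξs k).1 (hnorm i)
    linarith
  obtain ⟨r0, hr0, hball0⟩ := Metric.isOpen_iff.1 isOpen_interior ξP ξPint
  set ε := r0 / 3 with hεdef
  have hεpos : 0 < ε := by positivity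
  have hball2 : Metric.closedBall ξP (2 * ε) ⊆ P := by
    intro x hx
    rw [Metric.mem_closedBall] at hx
    exact interior_subset (hball0 (by rw [Metric.mem_ball]; rw [hεdef] at hx; linarith))
  have hinner : ∀ᶠ k in atTop, Metric.ball ξP ε ⊆ Ps k := by
    filter_upwards [hdist (ε/2) (by linarith)] with k hk
    intro z hz
    by_contra hzk
    obtain ⟨f, u, hfu, hzf⟩ :=
      geometric_hahn_banach_closed_point (hPs k).2.2.1 (hQcomp k).isClosed hzk
    have hfne : f ≠ 0 := by
      rintro rfl
      obtain ⟨y, hy⟩ := hQne k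
      have h0 := hfu y hy
      simp only [ContinuousLinearMap.zero_apply] at h0 hzf
      linarith
    have hfnorm : 0 < ‖f‖ := norm_pos_iff.2 hfne
    obtain ⟨w0, hw01, hw02⟩ := f.exists_lt_apply_of_lt_opNorm
      (show ‖f‖/2 < ‖f‖ by linarith)
    obtain ⟨w, hw1, hw2⟩ : ∃ w : Eucl n, ‖w‖ ≤ 1 ∧ ‖f‖/2 < f w := by
      rcases le_or_gt (f w0) 0 with h | h
      · refine ⟨-w0, by simpa using hw01.le, ?_⟩
        rw [map_neg]
        rw [Real.norm_eq_abs, abs_of_nonpos h] at hw02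
        linarith
      · refine ⟨w0, hw01.le, ?_⟩
        rwa [Real.norm_eq_abs, abs_of_pos h] at hw02
    set x := z + ε • w with hxdef
    have hxP : x ∈ P := by
      apply hball2
      rw [Metric.mem_closedBall, dist_eq_norm]
      have hrw : z + ε • w - ξP = (z - ξP) + ε • w := by abel
      rw [hxdef, hrw]
      have hn1 : ‖z - ξP‖ < ε := by rw [← dist_eq_norm]; exact Metric.mem_ball.1 hz
      have hn2 : ‖ε • w‖ ≤ ε := by
        rw [norm_smul, Real.norm_eq_abs, abs_of_pos hεpos]
        nlinarith
      calc ‖(z - ξP) + ε • w‖ ≤ ‖z - ξP‖ + ‖ε • w‖ := norm_add_le _ _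
        _ ≤ 2 * ε := by linarith
    obtain ⟨a, haP, hax⟩ := Metric.exists_dist_lt_of_hausdorffDist_lt hxP
      (show Metric.hausdorffDist P (Ps k) < ε/2 by rwa [Metric.hausdorffDist_comm])
      (by rw [EMetric.hausdorffEdist_comm]; exact hedist k)
    have hfa : f a < u := hfu a haP
    have hfxa : f x - f a ≤ ‖f‖ * (ε/2) := by
      have hsub : f x - f a = f (x - a) := by rw [map_sub]
      rw [hsub]
      calc f (x - a) ≤ |f (x - a)| := le_abs_self _
        _ = ‖f (x - a)‖ := (Real.norm_eq_abs _).symm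
        _ ≤ ‖f‖ * ‖x - a‖ := f.le_opNorm _
        _ ≤ ‖f‖ * (ε/2) := by
            apply mul_le_mul_of_nonneg_left _ hfnorm.le
            rw [← dist_eq_norm]; exact hax.le
    have hfx : f x = f z + ε * f w := by
      rw [hxdef, map_add, f.map_smul, smul_eq_mul]
    have hgt : u + ε * (‖f‖/2) < f x := by
      rw [hfx]
      have := mul_lt_mul_of_pos_left hw2 hεpos
      linarith
    nlinarith
  have hinner2 : ∀ᶠ k in atTop,
      ξP ∈ interior (Ps k) ∧ ∀ i, ⟪ξP, v i⟫ + ε/2 ≤ suppFn (Ps k) (v i) := by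
    filter_upwards [hinner] with k hk
    refine ⟨mem_interior.2 ⟨_, hk, Metric.isOpen_ball, Metric.mem_ball_self hεpos⟩, fun i => ?_⟩
    have hmem : ξP + (ε/2) • v i ∈ Ps k := by
      apply hk
      rw [Metric.mem_ball, dist_eq_norm, add_sub_cancel_left, norm_smul, hnorm i, mul_one,
        Real.norm_eq_abs, abs_of_pos (by linarith)]
      linarith
    have h := inner_le_suppFn (hQcomp k) (v i) hmem
    rw [inner_add_left, real_inner_smul_left, real_inner_self_eq_norm_mul_norm, hnorm i] at h
    linarith
  have hPhiξP : Tendsto (fun k => PhiP p α v (Ps k) ξP) atTop (𝓝 (PhiP p α v P ξP)) := by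
    unfold PhiP
    apply Tendsto.const_mul
    apply tendsto_finset_sum
    intro i _
    apply Tendsto.const_mul
    exact (Real.continuousAt_rpow_const _ p (Or.inl (ne_of_gt (hgapP i)))).tendsto.comp
      ((hsupp i).sub tendsto_const_nhds)
  have hle : ∀ᶠ k in atTop, PhiP p α v (Ps k) (ξs k) ≤ PhiP p α v (Ps k) ξP :=
    hinner2.mono fun k hk => (hξs k).2 ξP hk.1
  have hbound : ∀ᶠ k in atTop, PhiP p α v (Ps k) (ξs k) ≤ PhiP p α v P ξP + 1 := by
    filter_upwards [hle, hPhiξP.eventually (gt_mem_nhds (lt_add_one (PhiP p α v P ξP)))]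
      with k hk1 hk2
    exact le_trans hk1 hk2.le
  obtain ⟨R0, hR0⟩ := hPcomp.isBounded.subset_closedBall 0
  have houter : ∀ᶠ k in atTop, ξs k ∈ Metric.closedBall (0 : Eucl n) (R0 + 1) := by
    filter_upwards [hdist 1 one_pos] with k hk
    have hxk : ξs k ∈ Ps k := interior_subset (hξs k).1
    obtain ⟨y, hy, hxy⟩ := Metric.exists_dist_lt_of_hausdorffDist_lt hxk hk (hedist k)
    have hyb := hR0 hy
    rw [Metric.mem_closedBall] at *
    calc dist (ξs k) 0 ≤ dist (ξs k) y + dist y 0 := dist_triangle _ _ _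
      _ ≤ R0 + 1 := by linarith
  have hstrict_mem : ∀ x : Eucl n, (∀ i, ⟪x, v i⟫ < suppFn P (v i)) → x ∈ P := by
    intro x hx
    rw [hPclosed.mem_iff_infDist_zero hPne]
    have hnn : 0 ≤ Metric.infDist x P := Metric.infDist_nonneg
    have hled : ∀ δ : ℝ, 0 < δ → Metric.infDist x P ≤ δ := by
      intro δ hδ
      have hev : ∀ᶠ k in atTop, (∀ i, ⟪x, v i⟫ < suppFn (Ps k) (v i)) ∧
          Metric.hausdorffDist (Ps k) P < δ := by
        refine Eventually.and ?_ (hdist δ hδ)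
        rw [Filter.eventually_all]
        exact fun i => (hsupp i).eventually (lt_mem_nhds (hx i))
      obtain ⟨k, hk1, hk2⟩ := hev.exists
      have hxk : x ∈ Ps k := by
        rw [(hPs k).2.2.2]
        exact Set.mem_iInter.2 fun i => (hk1 i).le
      calc Metric.infDist x P ≤ Metric.hausdorffDist (Ps k) P :=
            Metric.infDist_le_hausdorffDist_of_mem hxk (hedist k)
        _ ≤ δ := hk2.le
    have : Metric.infDist x P ≤ 0 := by
      by_contra hpos
      push_neg at hpos
      have := hled (Metric.infDist x P / 2) (by linarith)
      linarith
    linarith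
  have key : ∀ ks : ℕ → ℕ, Tendsto ks atTop atTop → ∀ ξstar : Eucl n,
      Tendsto (fun m => ξs (ks m)) atTop (𝓝 ξstar) →
      Tendsto (fun m => ξs (ks m)) atTop (𝓝 ξP) := by
    intro ks hks ξstar hconv'
    suffices hEq : ξstar = ξP by rwa [hEq] at hconv'
    have hstarP : ξstar ∈ P := by
      rw [hPclosed.mem_iff_infDist_zero hPne]
      have t1 : Tendsto (fun m => Metric.infDist (ξs (ks m)) P) atTop
          (𝓝 (Metric.infDist ξstar P)) :=
        ((Metric.continuous_infDist_pt P).tendsto ξstar).comp hconv'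
      have t2 : Tendsto (fun m => Metric.hausdorffDist (Ps (ks m)) P) atTop (𝓝 0) :=
        hconv.comp hks
      have hle' : ∀ m, Metric.infDist (ξs (ks m)) P ≤ Metric.hausdorffDist (Ps (ks m)) P :=
        fun m => Metric.infDist_le_hausdorffDist_of_mem (interior_subset (hξs (ks m)).1)
          (hedist _)
      have h1 := le_of_tendsto_of_tendsto t1 t2 (Eventually.of_forall hle')
      have h2 : (0:ℝ) ≤ Metric.infDist ξstar P := Metric.infDist_nonneg
      linarith
    by_cases hall : ∀ i, ⟪ξstar, v i⟫ < suppFn P (v i)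
    · have hstarint : ξstar ∈ interior P := by
        apply mem_interior.2
        refine ⟨{x | ∀ i, ⟪x, v i⟫ < suppFn P (v i)}, fun x hx => hstrict_mem x hx, ?_, hall⟩
        have hUeq : {x : Eucl n | ∀ i, ⟪x, v i⟫ < suppFn P (v i)}
            = ⋂ i, {x : Eucl n | ⟪x, v i⟫ < suppFn P (v i)} := by
          ext x; simp [Set.mem_iInter]
        rw [hUeq]
        exact isOpen_iInter_of_finite fun i =>
          isOpen_lt (continuous_id.inner continuous_const) continuous_const
      have hgapstar : ∀ i, 0 < suppFn P (v i) - ⟪ξstar, v i⟫ := fun i => by linarith [hall i]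
      have hPhi1 : Tendsto (fun m => PhiP p α v (Ps (ks m)) (ξs (ks m))) atTop
          (𝓝 (PhiP p α v P ξstar)) := by
        unfold PhiP
        apply Tendsto.const_mul
        apply tendsto_finset_sum
        intro i _
        apply Tendsto.const_mul
        have hbase : Tendsto (fun m => suppFn (Ps (ks m)) (v i) - ⟪ξs (ks m), v i⟫) atTop
            (𝓝 (suppFn P (v i) - ⟪ξstar, v i⟫)) :=
          ((hsupp i).comp hks).sub (hconv'.inner tendsto_const_nhds)
        exact (Real.continuousAt_rpow_const _ p
          (Or.inl (ne_of_gt (hgapstar i)))).tendsto.comp hbase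
      have hPhi2 : Tendsto (fun m => PhiP p α v (Ps (ks m)) ξP) atTop
          (𝓝 (PhiP p α v P ξP)) := hPhiξP.comp hks
      have hlemin : PhiP p α v P ξstar ≤ PhiP p α v P ξP :=
        le_of_tendsto_of_tendsto hPhi1 hPhi2 (hks.eventually hle)
      by_contra hne
      have hwne : ξstar - ξP ≠ 0 := sub_ne_zero.2 hne
      obtain ⟨i0, hi0⟩ := hsep _ hwne
      set z := (1/2 : ℝ) • ξstar + (1/2 : ℝ) • ξP with hzdef
      have hzint : z ∈ interior P :=
        hPconv.interior hstarint ξPint (by norm_num) (by norm_num) (by norm_num)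
      have hzinner : ∀ i, suppFn P (v i) - ⟪z, v i⟫
          = ((suppFn P (v i) - ⟪ξstar, v i⟫) + (suppFn P (v i) - ⟪ξP, v i⟫)) / 2 := by
        intro i
        rw [hzdef, inner_add_left, real_inner_smul_left, real_inner_smul_left]; ring
      have hmineq : PhiP p α v P ξstar = PhiP p α v P ξP :=
        le_antisymm hlemin (ξPmin ξstar hstarint)
      have hSeq : ∑ i, α i * (suppFn P (v i) - ⟪ξstar, v i⟫) ^ p
          = ∑ i, α i * (suppFn P (v i) - ⟪ξP, v i⟫) ^ p := by
        unfold PhiP at hmineq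
        exact mul_left_cancel₀ (ne_of_gt hcpos) hmineq
      have hsum : ∑ i, α i * (suppFn P (v i) - ⟪z, v i⟫) ^ p <
          ∑ i, (α i * (suppFn P (v i) - ⟪ξstar, v i⟫) ^ p
            + α i * (suppFn P (v i) - ⟪ξP, v i⟫) ^ p) / 2 := by
        apply Finset.sum_lt_sum
        · intro i _
          rw [hzinner i]
          have h := rpow_midpoint_le hp (hgapstar i) (hgapP i)
          have h2 := mul_le_mul_of_nonneg_left h (hα i).le
          linarith
        · refine ⟨i0, Finset.mem_univ _, ?_⟩
          have hne' : suppFn P (v i0) - ⟪ξstar, v i0⟫ ≠ suppFn P (v i0) - ⟪ξP, v i0⟫ := by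
            intro hcontra
            have h0 : (inner ℝ (v i0) (ξstar - ξP) : ℝ) = 0 := by
              rw [inner_sub_right, real_inner_comm ξstar (v i0), real_inner_comm ξP (v i0)]
              linarith
            linarith
          rw [hzinner i0]
          have h := rpow_midpoint_lt hp (hgapstar i0) (hgapP i0) hne'
          have h2 := mul_lt_mul_of_pos_left h (hα i0)
          linarith
      have hsum2 : ∑ i, (α i * (suppFn P (v i) - ⟪ξstar, v i⟫) ^ p
            + α i * (suppFn P (v i) - ⟪ξP, v i⟫) ^ p) / 2
          = ∑ i, α i * (suppFn P (v i) - ⟪ξP, v i⟫) ^ p := by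
        rw [← Finset.sum_div, Finset.sum_add_distrib, hSeq]
        ring
      have hPhiz : PhiP p α v P z < PhiP p α v P ξP := by
        unfold PhiP
        exact mul_lt_mul_of_pos_left (hsum.trans_eq hsum2) hcpos
      exact absurd (ξPmin z hzint) (not_le.2 hPhiz)
    · exfalso
      push_neg at hall
      obtain ⟨i0, hi0⟩ := hall
      have hub : ⟪ξstar, v i0⟫ = suppFn P (v i0) :=
        le_antisymm (inner_le_suppFn hPcomp _ hstarP) hi0
      have heq0 : Tendsto (fun m => suppFn (Ps (ks m)) (v i0) - ⟪ξs (ks m), v i0⟫)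
          atTop (𝓝 0) := by
        have h := ((hsupp i0).comp hks).sub
          (hconv'.inner (tendsto_const_nhds : Tendsto _ _ (𝓝 (v i0))))
        simpa [hub] using h
      have hto : Tendsto (fun m => (suppFn (Ps (ks m)) (v i0) - ⟪ξs (ks m), v i0⟫) ^ p)
          atTop atTop :=
        tendsto_rpow_atTop_of_tendsto_zero hp heq0 (Eventually.of_forall fun m => hgapQ _ _)
      have hlow : ∀ m, -(1/p) * (α i0 * (suppFn (Ps (ks m)) (v i0) - ⟪ξs (ks m), v i0⟫) ^ p)
          ≤ PhiP p α v (Ps (ks m)) (ξs (ks m)) := by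
        intro m
        unfold PhiP
        refine mul_le_mul_of_nonneg_left ?_ hcpos.le
        exact Finset.single_le_sum
          (fun i _ => mul_nonneg (hα i).le (Real.rpow_nonneg (hgapQ _ i).le p))
          (Finset.mem_univ i0)
      have htop : Tendsto (fun m => PhiP p α v (Ps (ks m)) (ξs (ks m))) atTop atTop :=
        tendsto_atTop_mono hlow
          (Filter.Tendsto.const_mul_atTop hcpos
            (Filter.Tendsto.const_mul_atTop (hα i0) hto))
      have hcomb := (hks.eventually hbound).and
        (htop.eventually (eventually_ge_atTop (PhiP p α v P ξP + 2)))
      obtain ⟨m, h1, h2⟩ := hcomb.exists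
      linarith
  have hξtend : Tendsto ξs atTop (𝓝 ξP) := by
    apply tendsto_of_subseq_tendsto
    intro ns hns
    have hfreq : ∃ᶠ m in atTop, ξs (ns m) ∈ Metric.closedBall (0 : Eucl n) (R0 + 1) :=
      (hns.eventually houter).frequently
    obtain ⟨a, _, φ, hφ, hc⟩ :=
      (isCompact_closedBall (0 : Eucl n) (R0 + 1)).tendsto_subseq' hfreq
    exact ⟨φ, key (ns ∘ φ) (hns.comp hφ.tendsto_atTop) a hc⟩
  have hPhitend : Tendsto (fun k => PhiP p α v (Ps k) (ξs k)) atTop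
      (𝓝 (PhiP p α v P ξP)) := by
    unfold PhiP
    apply Tendsto.const_mul
    apply tendsto_finset_sum
    intro i _
    apply Tendsto.const_mul
    have hbase : Tendsto (fun k => suppFn (Ps k) (v i) - ⟪ξs k, v i⟫) atTop
        (𝓝 (suppFn P (v i) - ⟪ξP, v i⟫)) :=
      (hsupp i).sub (hξtend.inner tendsto_const_nhds)
    exact (Real.continuousAt_rpow_const _ p (Or.inl (ne_of_gt (hgapP i)))).tendsto.comp hbase
  exact ⟨hξtend, hPhitend⟩


end
end

section
/- Let v_1, …, v_N ∈ S^{n-1} be in general position in dimension n, and let (P_i) be a sequence of polytopes in 𝒫(v_1,…,v_N). If the outer radii R(P_i) (radius of the smallest enclosing ball) are not uniformly bounded in i, then the inner radii r(P_i) (radius of the largest inscribed ball) are not uniformly bounded in i either. -/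
open MeasureTheory Metric Set Filter
open scoped ENNReal NNReal RealInnerProductSpace Pointwise Topology

noncomputable section

/-- The outer radius of `P`: the radius of the smallest ball containing `P`. -/
def outerRad {n : ℕ} (P : Set (Eucl n)) : ℝ :=
  sInf {r : ℝ | ∃ x : Eucl n, P ⊆ Metric.closedBall x r}

/-- The inner radius of `P`: the radius of the largest ball contained in `P`. -/
def innerRad {n : ℕ} (P : Set (Eucl n)) : ℝ :=
  sSup {r : ℝ | ∃ x : Eucl n, Metric.closedBall x r ⊆ P}

section Aux

variable {n N : ℕ} {v : Fin N → Eucl n}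

lemma genpos_delta (hn : 1 ≤ n) (hgp : InGenPos n N v) :
    ∃ δ : ℝ, 0 < δ ∧ ∀ w : Eucl n, ∃ i, δ * ‖w‖ ≤ ⟪v i, w⟫ := by
  have key : ∃ δ : ℝ, 0 < δ ∧ ∀ w : Eucl n, ‖w‖ = 1 → ∃ i, ⟪v i, w⟫ ≤ -δ := by
    by_contra h
    push_neg at h
    have h' : ∀ k : ℕ, ∃ w : Eucl n, ‖w‖ = 1 ∧ ∀ i, -(1/(k+1) : ℝ) < ⟪v i, w⟫ := by
      intro k
      obtain ⟨w, hw, hwi⟩ := h (1/(k+1)) (by positivity)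
      exact ⟨w, hw, fun i => hwi i⟩
    choose w hw1 hw2 using h'
    have hmem : ∀ k, w k ∈ sphere (0 : Eucl n) 1 := by
      intro k; simpa [mem_sphere_iff_norm] using hw1 k
    obtain ⟨a, ha, φ, hφ, hta⟩ :=
      (isCompact_sphere (0 : Eucl n) 1).tendsto_subseq hmem
    have hanorm : ‖a‖ = 1 := by simpa [mem_sphere_iff_norm] using ha
    have hane : a ≠ 0 := by intro h0; rw [h0] at hanorm; simp at hanorm
    obtain ⟨i, hi⟩ := hgp.2.1 a hane
    have hip : Tendsto (fun k => ⟪v i, w (φ k)⟫) atTop (𝓝 ⟪v i, a⟫) :=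
      ((continuous_const.inner continuous_id).tendsto a).comp hta
    have hlb : Tendsto (fun k : ℕ => -(1/(k+1) : ℝ)) atTop (𝓝 0) := by
      rw [show (0:ℝ) = -0 by ring]
      exact (tendsto_one_div_add_atTop_nhds_zero_nat).neg
    have : (0:ℝ) ≤ ⟪v i, a⟫ := by
      refine le_of_tendsto_of_tendsto hlb hip (Eventually.of_forall fun k => ?_)
      have h1 : -(1/(k+1) : ℝ) ≤ -(1/(φ k + 1) : ℝ) := by
        have := hφ.le_apply (x := k)
        have : (k:ℝ) + 1 ≤ (φ k : ℝ) + 1 := by exact_mod_cast Nat.succ_le_succ this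
        have h2 : (0:ℝ) < (k:ℝ)+1 := by positivity
        have := one_div_le_one_div_of_le h2 this
        linarith
      exact le_trans h1 (hw2 (φ k) i).le
    linarith
  obtain ⟨δ, hδ, hδ2⟩ := key
  refine ⟨δ, hδ, fun w => ?_⟩
  rcases eq_or_ne w 0 with rfl | hw
  · have hne : (0 : Eucl n) ≠ EuclideanSpace.single (⟨0, by omega⟩ : Fin n) (1:ℝ) := by
      intro h
      have := congrArg (fun z => ‖z‖) h
      simp [EuclideanSpace.norm_single] at this
    obtain ⟨i, _⟩ := hgp.2.1 _ (Ne.symm hne)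
    exact ⟨i, by simp⟩
  · obtain ⟨i, hi⟩ := hδ2 (-(‖w‖⁻¹ • w)) (by
      simp [norm_smul, norm_neg, hw, norm_ne_zero_iff.mpr hw])
    refine ⟨i, ?_⟩
    rw [inner_neg_right, real_inner_smul_right] at hi
    have hwpos : (0:ℝ) < ‖w‖ := norm_pos_iff.mpr hw
    have h3 : δ ≤ ‖w‖⁻¹ * ⟪v i, w⟫ := by linarith
    have h4 := mul_le_mul_of_nonneg_left h3 hwpos.le
    rw [← mul_assoc, mul_inv_cancel₀ (ne_of_gt hwpos), one_mul] at h4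
    linarith [h4]

lemma genpos_n_le_N (hgp : InGenPos n N v) : n ≤ N := by
  have hspan : Submodule.span ℝ (Set.range v) = ⊤ := by
    by_contra hne
    have hbot : (Submodule.span ℝ (Set.range v))ᗮ ≠ ⊥ := by
      intro h
      exact hne (Submodule.orthogonal_eq_bot_iff.mp h)
    obtain ⟨w, hwmem, hw0⟩ := Submodule.ne_bot_iff _ |>.mp hbot
    obtain ⟨i, hi⟩ := hgp.2.1 w hw0
    have : ⟪v i, w⟫ = 0 :=
      hwmem _ (Submodule.subset_span (Set.mem_range_self i))
    linarith
  have h1 : Module.finrank ℝ (Eucl n) = n := finrank_euclideanSpace_fin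
  have h2 := finrank_range_le_card (R := ℝ) v
  rw [Set.finrank, hspan] at h2
  rw [finrank_top, h1] at h2
  simpa using h2

lemma exists_dual (T : Finset (Fin N))
    (h : LinearIndependent ℝ (fun i : T => v (i : Fin N))) :
    ∃ d : Eucl n, ∀ i ∈ T, ⟪v i, d⟫ = -1 := by
  classical
  let L : Eucl n →ₗ[ℝ] (T → ℝ) :=
    { toFun := fun x => fun i => ⟪v (i : Fin N), x⟫
      map_add' := by intro x y; funext i; simp [inner_add_right]
      map_smul' := by intro c x; funext i; simp [inner_smul_right] }
  have hker : LinearMap.ker L = (Submodule.span ℝ (Set.range fun i : T => v (i : Fin N)))ᗮ := by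
    ext x
    simp only [LinearMap.mem_ker, Submodule.mem_orthogonal]
    constructor
    · intro hx u hu
      have : ∀ u ∈ Set.range fun i : T => v (i : Fin N), ⟪u, x⟫ = 0 := by
        rintro _ ⟨i, rfl⟩
        exact congrFun hx i
      induction hu using Submodule.span_induction with
      | mem u hu => exact this u hu
      | zero => simp
      | add u w _ _ hu hw => rw [inner_add_left, hu, hw]; ring
      | smul c u _ hu => rw [real_inner_smul_left, hu]; ring
    · intro hx
      funext i
      exact hx _ (Submodule.subset_span (Set.mem_range_self i))
  have hspanrank : Module.finrank ℝ
      (Submodule.span ℝ (Set.range fun i : T => v (i : Fin N))) = T.card := by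
    rw [finrank_span_eq_card h, Fintype.card_coe]
  have horth := Submodule.finrank_add_finrank_orthogonal
    (K := Submodule.span ℝ (Set.range fun i : T => v (i : Fin N))) (𝕜 := ℝ)
  have hrn := LinearMap.finrank_range_add_finrank_ker L
  have hE : Module.finrank ℝ (Eucl n) = n := finrank_euclideanSpace_fin
  have hpi : Module.finrank ℝ (T → ℝ) = T.card := by
    simp [Module.finrank_pi, Fintype.card_coe]
  have hrange : LinearMap.range L = ⊤ := by
    apply Submodule.eq_top_of_finrank_eq
    rw [hpi]
    rw [hker] at hrn
    omega
  have hmem : (fun _ : T => (-1 : ℝ)) ∈ LinearMap.range L := by rw [hrange]; trivial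
  obtain ⟨d, hd⟩ := hmem
  exact ⟨d, fun i hi => congrFun hd ⟨i, hi⟩⟩

lemma exists_ball (hn : 2 ≤ n) (hgp : InGenPos n N v) (g : Fin N → ℝ) (a b : Eucl n)
    (ha : ∀ i, ⟪a, v i⟫ ≤ g i) (hb : ∀ i, ⟪b, v i⟫ ≤ g i) (hab : a ≠ b) :
    ∃ (x : Eucl n) (ρ : ℝ), 0 < ρ ∧ ∀ i, ⟪x, v i⟫ + ρ ≤ g i := by
  classical
  set x0 : Eucl n := (2⁻¹ : ℝ) • (a + b) with hx0
  set u : Eucl n := b - a with hu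
  have hune : u ≠ 0 := sub_ne_zero.mpr (Ne.symm hab)
  have hx0i : ∀ i, ⟪x0, v i⟫ = (⟪a, v i⟫ + ⟪b, v i⟫) / 2 := by
    intro i; rw [hx0, real_inner_smul_left, inner_add_left]; ring
  have hx0le : ∀ i, ⟪x0, v i⟫ ≤ g i := by
    intro i; rw [hx0i i]; linarith [ha i, hb i]
  set T : Finset (Fin N) := Finset.univ.filter (fun i => ⟪x0, v i⟫ = g i) with hT
  have hTperp : ∀ i ∈ T, ⟪u, v i⟫ = 0 := by
    intro i hi
    have heq : ⟪x0, v i⟫ = g i := by simpa [hT] using hi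
    rw [hx0i i] at heq
    have h1 : ⟪a, v i⟫ = g i := by linarith [ha i, hb i]
    have h2 : ⟪b, v i⟫ = g i := by linarith [ha i, hb i]
    rw [hu, inner_sub_left, h1, h2]; ring
  -- T.card < n
  have hTcard : T.card < n := by
    by_contra hc
    push_neg at hc
    obtain ⟨t, hts, htc⟩ := Finset.exists_subset_card_eq hc
    have hind := hgp.2.2 t htc
    -- vectors v i, i ∈ t, lie in (ℝ ∙ u)ᗮ
    set K := (ℝ ∙ u)ᗮ with hK
    have hmem : ∀ i : t, v (i : Fin N) ∈ K := by
      intro i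
      rw [hK, Submodule.mem_orthogonal_singleton_iff_inner_right]
      exact hTperp i (hts i.2)
    set w : t → K := fun i => ⟨v (i : Fin N), hmem i⟩ with hw
    have hindw : LinearIndependent ℝ w := by
      have : (fun i : t => v (i : Fin N)) = (K.subtype ∘ w) := rfl
      rw [this] at hind
      exact LinearIndependent.of_comp K.subtype hind
    have hcard := hindw.fintype_card_le_finrank
    have hKrank : Module.finrank ℝ K + 1 = n := by
      have h1 : Module.finrank ℝ (ℝ ∙ u) = 1 := finrank_span_singleton hune
      have h2 := Submodule.finrank_add_finrank_orthogonal (K := (ℝ ∙ u)) (𝕜 := ℝ)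
      rw [h1, finrank_euclideanSpace_fin] at h2
      rw [← hK] at h2
      omega
    rw [Fintype.card_coe, htc] at hcard
    omega
  -- extend T to a card-n set and get independence of v on T
  have hindT : LinearIndependent ℝ (fun i : T => v (i : Fin N)) := by
    obtain ⟨s, hTs, _, hscard⟩ := Finset.exists_subsuperset_card_eq (T.subset_univ)
      hTcard.le (by simpa using genpos_n_le_N hgp)
    have hind := hgp.2.2 s hscard
    have hinj : Function.Injective (fun i : T => (⟨i, hTs i.2⟩ : s)) := by
      intro i j hij
      exact Subtype.ext (congrArg (fun z : s => (z : Fin N)) hij)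
    exact hind.comp _ hinj
  obtain ⟨d, hd⟩ := exists_dual T hindT
  -- slack
  set Tc := Finset.univ \ T with hTc
  have hslack : ∀ i ∈ Tc, 0 < g i - ⟪x0, v i⟫ := by
    intro i hi
    have : ¬ (⟪x0, v i⟫ = g i) := by
      simp [hTc, hT] at hi
      simpa [hT] using hi
    have := lt_of_le_of_ne (hx0le i) this
    linarith
  set m : ℝ := if hc : Tc.Nonempty then Tc.inf' hc (fun i => g i - ⟪x0, v i⟫) else 1 with hm
  have hmpos : 0 < m := by
    rw [hm]
    split_ifs with hc
    · obtain ⟨j, hj, hje⟩ := Finset.exists_mem_eq_inf' hc (fun i => g i - ⟪x0, v i⟫)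
      rw [hje]
      exact hslack j hj
    · norm_num
  have hmle : ∀ i ∈ Tc, m ≤ g i - ⟪x0, v i⟫ := by
    intro i hi
    rw [hm]
    rw [dif_pos ⟨i, hi⟩]
    exact Finset.inf'_le _ hi
  set ε : ℝ := m / (2 * (‖d‖ + 1)) with hε
  have hεpos : 0 < ε := by
    rw [hε]; positivity
  set ρ : ℝ := min ε (m / 2) with hρ
  have hρpos : 0 < ρ := lt_min hεpos (by positivity)
  refine ⟨x0 + ε • d, ρ, hρpos, fun i => ?_⟩
  have hxi : ⟪x0 + ε • d, v i⟫ = ⟪x0, v i⟫ + ε * ⟪d, v i⟫ := by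
    simp only [inner_add_left, real_inner_smul_left]
  by_cases hiT : i ∈ T
  · have h1 : ⟪x0, v i⟫ = g i := by simpa [hT] using hiT
    have h2 : ⟪d, v i⟫ = -1 := by rw [real_inner_comm]; exact hd i hiT
    rw [hxi, h1, h2]
    have : ρ ≤ ε := min_le_left _ _
    linarith
  · have hiTc : i ∈ Tc := by simp [hTc, hiT]
    have h1 : m ≤ g i - ⟪x0, v i⟫ := hmle i hiTc
    have h2 : ⟪d, v i⟫ ≤ ‖d‖ := by
      calc ⟪d, v i⟫ ≤ ‖d‖ * ‖v i‖ := real_inner_le_norm d (v i)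
      _ = ‖d‖ := by rw [hgp.1 i, mul_one]
    have h3 : ε * ⟪d, v i⟫ ≤ m / 2 := by
      have : ε * ⟪d, v i⟫ ≤ ε * ‖d‖ := by
        apply mul_le_mul_of_nonneg_left h2 hεpos.le
      have h4 : ε * ‖d‖ ≤ m / 2 := by
        rw [hε]
        rw [div_mul_eq_mul_div, div_le_div_iff₀ (by positivity) (by norm_num)]
        nlinarith [norm_nonneg d, hmpos]
      linarith
    have h5 : ρ ≤ m / 2 := min_le_right _ _
    rw [hxi]
    linarith

lemma exists_unif (hn : 2 ≤ n) (hgp : InGenPos n N v) :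
    ∃ c : ℝ, 0 < c ∧ ∀ (g : Fin N → ℝ) (a b : Eucl n),
      ((∀ i, |g i| ≤ 1) ∧ (∀ i, ⟪a, v i⟫ ≤ g i) ∧ (∀ i, ⟪b, v i⟫ ≤ g i) ∧
        (1/2 : ℝ) ≤ ‖a - b‖) →
      ∃ x : Eucl n, ∀ i, ⟪x, v i⟫ + c ≤ g i := by
  obtain ⟨δ, hδ, hδ2⟩ := genpos_delta (by omega) hgp
  by_contra hcon
  push_neg at hcon
  have h' : ∀ k : ℕ, ∃ (g : Fin N → ℝ) (a b : Eucl n),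
      ((∀ i, |g i| ≤ 1) ∧ (∀ i, ⟪a, v i⟫ ≤ g i) ∧ (∀ i, ⟪b, v i⟫ ≤ g i) ∧
        (1/2 : ℝ) ≤ ‖a - b‖) ∧ ∀ x : Eucl n, ∃ i, g i < ⟪x, v i⟫ + 1/(k+1) := by
    intro k
    exact hcon (1/(k+1)) (by positivity)
  choose g a b hc hbad using h'
  -- bounds
  have hbnd : ∀ (k : ℕ) (y : Eucl n), (∀ i, ⟪y, v i⟫ ≤ g k i) → ‖y‖ ≤ 1/δ := by
    intro k y hy
    obtain ⟨i, hi⟩ := hδ2 y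
    have h1 : ⟪v i, y⟫ = ⟪y, v i⟫ := real_inner_comm _ _
    have h2 : g k i ≤ 1 := (abs_le.mp ((hc k).1 i)).2
    rw [h1] at hi
    rw [le_div_iff₀ hδ]
    linarith [hy i]
  -- the sequence in the product space
  set X := (Fin N → ℝ) × (Eucl n × Eucl n)
  set z : ℕ → X := fun k => (g k, a k, b k) with hz
  set R : ℝ := max 1 (1/δ) with hR
  have hzmem : ∀ k, z k ∈ closedBall (0 : X) R := by
    intro k
    rw [mem_closedBall_zero_iff]
    have hg : ‖g k‖ ≤ 1 := by
      rw [pi_norm_le_iff_of_nonneg zero_le_one]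
      intro i
      exact (hc k).1 i
    have ha' : ‖a k‖ ≤ 1/δ := hbnd k _ (hc k).2.1
    have hb' : ‖b k‖ ≤ 1/δ := hbnd k _ (hc k).2.2.1
    calc ‖z k‖ = max ‖g k‖ (max ‖a k‖ ‖b k‖) := by rw [Prod.norm_def, Prod.norm_def]
    _ ≤ R := by
      apply max_le (le_max_of_le_left hg)
      exact max_le (le_max_of_le_right ha') (le_max_of_le_right hb')
  obtain ⟨zl, _, φ, hφ, htz⟩ := (isCompact_closedBall (0 : X) R).tendsto_subseq hzmem
  obtain ⟨gl, al, bl⟩ := zl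
  have htg : Tendsto (fun k => g (φ k)) atTop (𝓝 gl) :=
    (continuous_fst.tendsto _).comp htz
  have hta : Tendsto (fun k => a (φ k)) atTop (𝓝 al) :=
    ((continuous_fst.comp continuous_snd).tendsto _).comp htz
  have htb : Tendsto (fun k => b (φ k)) atTop (𝓝 bl) :=
    ((continuous_snd.comp continuous_snd).tendsto _).comp htz
  have hgl : ∀ i, Tendsto (fun k => g (φ k) i) atTop (𝓝 (gl i)) :=
    fun i => ((continuous_apply i).tendsto _).comp htg
  have hal : ∀ i, ⟪al, v i⟫ ≤ gl i := by
    intro i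
    refine le_of_tendsto_of_tendsto
      (((continuous_id.inner continuous_const).tendsto _).comp hta) (hgl i)
      (Eventually.of_forall fun k => (hc (φ k)).2.1 i)
  have hbl : ∀ i, ⟪bl, v i⟫ ≤ gl i := by
    intro i
    refine le_of_tendsto_of_tendsto
      (((continuous_id.inner continuous_const).tendsto _).comp htb) (hgl i)
      (Eventually.of_forall fun k => (hc (φ k)).2.2.1 i)
  have hdist : (1/2 : ℝ) ≤ ‖al - bl‖ := by
    refine ge_of_tendsto ((hta.sub htb).norm) (Eventually.of_forall fun k => ?_)
    exact (hc (φ k)).2.2.2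
  have hne : al ≠ bl := by
    intro h
    rw [h, sub_self, norm_zero] at hdist
    linarith
  obtain ⟨x, ρ, hρ, hxρ⟩ := exists_ball hn hgp gl al bl hal hbl hne
  -- pick large k
  have e1 : ∀ᶠ k in atTop, ∀ i, gl i - ρ/2 ≤ g (φ k) i := by
    have := Metric.tendsto_atTop.mp htg (ρ/2) (by linarith)
    obtain ⟨K0, hK0⟩ := this
    refine eventually_atTop.mpr ⟨K0, fun k hk i => ?_⟩
    have h1 := hK0 k hk
    have h2 : dist (g (φ k) i) (gl i) ≤ dist (g (φ k)) gl := dist_le_pi_dist _ _ i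
    have := abs_le.mp (le_of_lt (lt_of_le_of_lt h2 h1))
    rw [Real.dist_eq] at h2
    have h3 : |g (φ k) i - gl i| < ρ/2 := lt_of_le_of_lt (by rw [← Real.dist_eq]; exact h2) h1
    have := abs_le.mp h3.le
    linarith [this.1]
  have e2' : ∀ᶠ k : ℕ in atTop, (1 : ℝ)/(k + 1) ≤ ρ/2 :=
    tendsto_one_div_add_atTop_nhds_zero_nat.eventually
      (eventually_le_nhds (show (0:ℝ) < ρ/2 by linarith))
  have e2 : ∀ᶠ k : ℕ in atTop, (1 : ℝ)/(φ k + 1) ≤ ρ/2 := by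
    refine e2'.mono (fun k hk => le_trans ?_ hk)
    have h1 : (k:ℝ) + 1 ≤ (φ k : ℝ) + 1 := by
      exact_mod_cast Nat.succ_le_succ (hφ.le_apply (x := k))
    exact one_div_le_one_div_of_le (by positivity) h1
  obtain ⟨k, hk1, hk2⟩ := (e1.and e2).exists
  obtain ⟨i, hi⟩ := hbad (φ k) x
  have h1 := hxρ i
  have h2 := hk1 i
  linarith

end Aux

/-- If polytopes in `𝒫(v_1,…,v_N)` with facet normals in general position get large,
they get large uniformly in all directions: if the outer radii are not uniformly
bounded, neither are the inner radii. -/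

theorem inner_radius_unbounded (n N : ℕ) (hn : 2 ≤ n) (v : Fin N → Eucl n)
    (hgp : InGenPos n N v) (Ps : ℕ → Set (Eucl n)) (hPs : ∀ i, MemPolyClass v (Ps i))
    (hR : ¬ ∃ C : ℝ, ∀ i, outerRad (Ps i) ≤ C) :
    ¬ ∃ C : ℝ, ∀ i, innerRad (Ps i) ≤ C := by
  rintro ⟨C, hC⟩
  obtain ⟨c, hc, hunif⟩ := exists_unif hn hgp
  apply hR
  refine ⟨C/c, fun k => ?_⟩
  obtain ⟨hPne, hPcomp, hPconv, hPrep⟩ := hPs k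
  set P := Ps k with hPdef
  set D := Metric.diam P with hD
  have hDnn : 0 ≤ D := Metric.diam_nonneg
  have hPbd : Bornology.IsBounded P := hPcomp.isBounded
  -- support function facts
  have hbdd : ∀ i : Fin N, BddAbove ((fun x => ⟪x, v i⟫) '' P) := by
    intro i
    exact (hPcomp.image (continuous_id.inner continuous_const)).bddAbove
  have hsupp_le : ∀ y ∈ P, ∀ i, ⟪y, v i⟫ ≤ suppFn P (v i) := by
    intro y hy i
    exact le_csSup (hbdd i) (Set.mem_image_of_mem _ hy)
  have hsupp_ub : ∀ a ∈ P, ∀ i, suppFn P (v i) ≤ ⟪a, v i⟫ + D := by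
    intro a ha i
    apply csSup_le (hPne.image _)
    rintro _ ⟨y, hy, rfl⟩
    have h1 : ⟪y, v i⟫ = ⟪a, v i⟫ + ⟪y - a, v i⟫ := by
      rw [inner_sub_left]; ring
    have h2 : ⟪y - a, v i⟫ ≤ ‖y - a‖ * ‖v i‖ := real_inner_le_norm _ _
    have h3 : ‖y - a‖ ≤ D := by
      rw [← dist_eq_norm]
      exact Metric.dist_le_diam_of_mem hPbd hy ha
    rw [hgp.1 i, mul_one] at h2
    linarith
  -- inner radius set facts
  have hIbdd : BddAbove {r : ℝ | ∃ x : Eucl n, Metric.closedBall x r ⊆ P} := by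
    refine ⟨D, fun r hr => ?_⟩
    obtain ⟨x, hx⟩ := hr
    rcases le_or_gt r 0 with h | h
    · linarith
    · have hxP : x ∈ P := hx (Metric.mem_closedBall_self h.le)
      set e : Eucl n := EuclideanSpace.single (⟨0, by omega⟩ : Fin n) (1:ℝ) with he
      have hen : ‖e‖ = 1 := by simp [he, EuclideanSpace.norm_single]
      have hmem : x + r • e ∈ P := by
        apply hx
        rw [Metric.mem_closedBall]
        rw [dist_self_add_left]
        rw [norm_smul, hen, mul_one, Real.norm_eq_abs, abs_of_pos h]
      have := Metric.dist_le_diam_of_mem hPbd hmem hxP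
      rw [dist_self_add_left, norm_smul, hen, mul_one, Real.norm_eq_abs, abs_of_pos h] at this
      exact this
  have hInn : c * D ≤ innerRad P := by
    rcases eq_or_lt_of_le hDnn with h0 | hDpos
    · obtain ⟨p, hp⟩ := hPne
      have h1 : (0:ℝ) ∈ {r : ℝ | ∃ x : Eucl n, Metric.closedBall x r ⊆ P} := by
        refine ⟨p, ?_⟩
        intro y hy
        rw [Metric.mem_closedBall, dist_le_zero] at hy
        rwa [hy]
      have := le_csSup hIbdd h1
      rw [← h0, mul_zero]
      exact this
    · -- get two far points
      have hfar : ∃ a ∈ P, ∃ b ∈ P, D/2 ≤ dist a b := by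
        by_contra hcon
        push_neg at hcon
        have : D ≤ D/2 := Metric.diam_le_of_forall_dist_le (by linarith)
          (fun x hx y hy => (hcon x hx y hy).le)
        linarith
      obtain ⟨a, ha, b, hb, hab⟩ := hfar
      set gg : Fin N → ℝ := fun i => (suppFn P (v i) - ⟪a, v i⟫) / D with hgg
      have hggnn : ∀ i, 0 ≤ gg i := by
        intro i
        apply div_nonneg _ hDnn
        linarith [hsupp_le a ha i]
      have hggub : ∀ i, gg i ≤ 1 := by
        intro i
        rw [div_le_one hDpos]
        linarith [hsupp_ub a ha i]
      have hcond : (∀ i, |gg i| ≤ 1) ∧ (∀ i, ⟪(0 : Eucl n), v i⟫ ≤ gg i) ∧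
          (∀ i, ⟪D⁻¹ • (b - a), v i⟫ ≤ gg i) ∧ (1/2 : ℝ) ≤ ‖(0 : Eucl n) - D⁻¹ • (b - a)‖ := by
        refine ⟨?_, ?_, ?_, ?_⟩
        · intro i; rw [abs_le]; exact ⟨by linarith [hggnn i], hggub i⟩
        · intro i; rw [inner_zero_left]; exact hggnn i
        · intro i
          rw [real_inner_smul_left, inner_sub_left]
          have : gg i = D⁻¹ * (suppFn P (v i) - ⟪a, v i⟫) := by
            rw [hgg]; field_simp
          rw [this]
          apply mul_le_mul_of_nonneg_left _ (by positivity)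
          linarith [hsupp_le b hb i]
        · rw [zero_sub, norm_neg, norm_smul, norm_sub_rev, ← dist_eq_norm]
          rw [Real.norm_eq_abs, abs_of_pos (show (0:ℝ) < D⁻¹ by positivity)]
          calc (1/2 : ℝ) = D⁻¹ * (D/2) := by field_simp
          _ ≤ D⁻¹ * dist a b := by
            apply mul_le_mul_of_nonneg_left hab (by positivity)
      obtain ⟨x', hx'⟩ := hunif gg 0 (D⁻¹ • (b - a)) hcond
      -- ball inside P
      have hball : Metric.closedBall (a + D • x') (c * D) ⊆ P := by
        intro y hy
        rw [Metric.mem_closedBall, dist_eq_norm] at hy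
        rw [hPrep]
        rw [Set.mem_iInter]
        intro i
        rw [Set.mem_setOf_eq]
        have h1 : ⟪y, v i⟫ = ⟪a + D • x', v i⟫ + ⟪y - (a + D • x'), v i⟫ := by
          rw [inner_sub_left]; ring
        have h2 : ⟪y - (a + D • x'), v i⟫ ≤ c * D := by
          calc ⟪y - (a + D • x'), v i⟫ ≤ ‖y - (a + D • x')‖ * ‖v i‖ := real_inner_le_norm _ _
          _ = ‖y - (a + D • x')‖ := by rw [hgp.1 i, mul_one]
          _ ≤ c * D := hy
        have h3 : ⟪a + D • x', v i⟫ = ⟪a, v i⟫ + D * ⟪x', v i⟫ := by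
          simp only [inner_add_left, real_inner_smul_left]
        have h4 := hx' i
        have h5 : D * gg i = suppFn P (v i) - ⟪a, v i⟫ := by
          rw [hgg]
          field_simp
        nlinarith [hx' i, hDpos]
      have := le_csSup hIbdd ⟨a + D • x', hball⟩
      have h9 : innerRad P = sSup {r : ℝ | ∃ x : Eucl n, Metric.closedBall x r ⊆ P} := rfl
      linarith [this, h9.ge, h9.le]
  -- outer radius ≤ D
  have hout : outerRad P ≤ D := by
    obtain ⟨p, hp⟩ := hPne
    apply csInf_le
    · refine ⟨0, fun r hr => ?_⟩
      obtain ⟨x, hx⟩ := hr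
      have := hx hp
      rw [Metric.mem_closedBall] at this
      linarith [dist_nonneg (x := p) (y := x)]
    · refine ⟨p, fun y hy => ?_⟩
      rw [Metric.mem_closedBall]
      exact Metric.dist_le_diam_of_mem hPbd hy hp
  -- conclude
  have h6 : c * D ≤ C := le_trans hInn (hC k)
  have h7 : D ≤ C / c := by
    rw [le_div_iff₀ hc]
    linarith [h6]
  linarith

end
end

section
/- Let v_1, …, v_N ∈ S^{n-1} be in general position in dimension n, and let P ∈ 𝒫(v_1,…,v_N). Then for each 1 ≤ i ≤ N, the set F(P, v_i) = P ∩ H(P, v_i) is either a single point or a facet of P (a face of dimension n−1). Furthermore, if n ≥ 3 and F(P, v_i) is a facet, then the outer unit normals of F(P, v_i) within the hyperplane H(P, v_i) are also in general position (in dimension n−1). -/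
open MeasureTheory Metric Set Filter
open scoped ENNReal NNReal RealInnerProductSpace Pointwise Topology

noncomputable section

/-- The face of `F` in direction `u`: `F ∩ {x : x·u = h_F(u)}`. -/
def faceIn {n : ℕ} (F : Set (Eucl n)) (u : Eucl n) : Set (Eucl n) :=
  F ∩ {x : Eucl n | ⟪x, u⟫ = suppFn F u}

/-- The outer unit normals, within the hyperplane orthogonal to `w`, of the facets
(faces of dimension `dim F - 1`) of `F`. -/
def facetNormalsIn {n : ℕ} (w : Eucl n) (F : Set (Eucl n)) : Set (Eucl n) :=
  {u : Eucl n | ⟪u, w⟫ = 0 ∧ ‖u‖ = 1 ∧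
    Module.finrank ℝ (vectorSpan ℝ (faceIn F u)) = Module.finrank ℝ (vectorSpan ℝ F) - 1}

namespace FacetAux

open Module Submodule

variable {n N : ℕ} {v : Fin N → Eucl n} {P : Set (Eucl n)}

lemma supp_isGreatest {K : Set (Eucl n)} (hne : K.Nonempty) (hc : IsCompact K) (u : Eucl n) :
    IsGreatest ((fun x => ⟪x, u⟫) '' K) (suppFn K u) := by
  have hcont : Continuous fun x : Eucl n => (⟪x, u⟫ : ℝ) := continuous_id.inner continuous_const
  obtain ⟨x, hxK, hmax⟩ := hc.exists_isMaxOn hne hcont.continuousOn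
  have hg : IsGreatest ((fun x => ⟪x, u⟫) '' K) ⟪x, u⟫ :=
    ⟨⟨x, hxK, rfl⟩, by rintro _ ⟨y, hy, rfl⟩; exact hmax hy⟩
  have h2 : suppFn K u = ⟪x, u⟫ := hg.csSup_eq
  rw [suppFn, hg.csSup_eq]; exact hg

lemma supp_le {K : Set (Eucl n)} (hne : K.Nonempty) (hc : IsCompact K) {x : Eucl n}
    (hx : x ∈ K) (u : Eucl n) : ⟪x, u⟫ ≤ suppFn K u :=
  (supp_isGreatest hne hc u).2 ⟨x, hx, rfl⟩

lemma supp_mem {K : Set (Eucl n)} (hne : K.Nonempty) (hc : IsCompact K) (u : Eucl n) :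
    ∃ x ∈ K, ⟪x, u⟫ = suppFn K u := by
  obtain ⟨x, hx, hxe⟩ := (supp_isGreatest hne hc u).1
  exact ⟨x, hx, hxe⟩

lemma memP_iff (hP : MemPolyClass v P) {x : Eucl n} :
    x ∈ P ↔ ∀ j, ⟪x, v j⟫ ≤ suppFn P (v j) := by
  conv_lhs => rw [hP.2.2.2]
  simp only [Set.mem_iInter, Set.mem_setOf_eq]

lemma mem_orth_span_iff {S : Set (Eucl n)} {z : Eucl n} :
    z ∈ (span ℝ S)ᗮ ↔ ∀ u ∈ S, ⟪u, z⟫ = 0 := by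
  constructor
  · intro h u hu
    exact (Submodule.mem_orthogonal _ _).mp h u (Submodule.subset_span hu)
  · intro h
    rw [Submodule.mem_orthogonal]
    intro u hu
    induction hu using Submodule.span_induction with
    | mem x hx => exact h x hx
    | zero => simp
    | add x y _ _ hx hy => rw [inner_add_left, hx, hy, add_zero]
    | smul a x _ hx => rw [real_inner_smul_left, hx, mul_zero]

def phi (v : Fin N → Eucl n) (s : Finset (Fin N)) : Eucl n →ₗ[ℝ] (s → ℝ) :=
  LinearMap.pi (fun j => innerₛₗ ℝ (v j))

lemma range_restrict (s : Finset (Fin N)) :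
    Set.range (fun j : s => v (j : Fin N)) = v '' (s : Set (Fin N)) := by
  ext x
  simp [Set.mem_range, Set.mem_image, Subtype.exists]

lemma n_le_N (hgp : InGenPos n N v) : n ≤ N := by
  by_contra hcon
  push_neg at hcon
  set φ := phi v (Finset.univ : Finset (Fin N)) with hφ
  have h1 : finrank ℝ (LinearMap.range φ) ≤ N := by
    refine le_trans (Submodule.finrank_le _) ?_
    rw [Module.finrank_pi, Fintype.card_coe, Finset.card_univ, Fintype.card_fin]
  have h2 := LinearMap.finrank_range_add_finrank_ker φ
  rw [finrank_euclideanSpace_fin] at h2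
  have h3 : 0 < finrank ℝ (LinearMap.ker φ) := by omega
  have h4 : LinearMap.ker φ ≠ ⊥ := by
    intro hbot
    rw [hbot, finrank_bot] at h3
    omega
  obtain ⟨z, hz, hz0⟩ := Submodule.ne_bot_iff _ |>.mp h4
  obtain ⟨j, hj⟩ := hgp.2.1 z hz0
  have : ⟪v j, z⟫ = 0 := by
    have := congrFun (LinearMap.mem_ker.mp hz) ⟨j, Finset.mem_univ j⟩
    simpa [hφ, phi] using this
  rw [this] at hj
  exact lt_irrefl 0 hj

lemma indep (hgp : InGenPos n N v) {s : Finset (Fin N)} (hs : s.card ≤ n) :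
    LinearIndependent ℝ (fun j : s => v (j : Fin N)) := by
  obtain ⟨t, hst, htc⟩ := Finset.exists_superset_card_eq hs (by simpa using n_le_N hgp)
  have ht := hgp.2.2 t htc
  have := ht.comp (fun j : s => (⟨j.1, hst j.2⟩ : t))
    (fun a b hab => Subtype.ext (by simpa using congrArg Subtype.val hab))
  exact this

lemma finrank_span_image (hgp : InGenPos n N v) {A : Finset (Fin N)} (hA : A.card ≤ n) :
    finrank ℝ (span ℝ (v '' (A : Set (Fin N)))) = A.card := by
  rw [← range_restrict]
  rw [finrank_span_eq_card (indep hgp hA), Fintype.card_coe]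

lemma phi_surj (hgp : InGenPos n N v) (s : Finset (Fin N)) (hs : s.card ≤ n)
    (c : s → ℝ) : ∃ z : Eucl n, ∀ j : s, ⟪v (j : Fin N), z⟫ = c j := by
  have hker : LinearMap.ker (phi v s) = (span ℝ (v '' (s : Set (Fin N))))ᗮ := by
    ext z
    rw [LinearMap.mem_ker, mem_orth_span_iff]
    constructor
    · rintro h u ⟨j, hj, rfl⟩
      have := congrFun h ⟨j, hj⟩
      simpa [phi] using this
    · intro h
      funext j
      simpa [phi] using h (v j) ⟨j, j.2, rfl⟩
  have h1 : finrank ℝ (LinearMap.ker (phi v s)) = n - s.card := by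
    rw [hker]
    have := Submodule.finrank_add_finrank_orthogonal (span ℝ (v '' (s : Set (Fin N))))
    rw [finrank_span_image hgp hs, finrank_euclideanSpace_fin] at this
    omega
  have h2 := LinearMap.finrank_range_add_finrank_ker (phi v s)
  rw [finrank_euclideanSpace_fin, h1] at h2
  have h3 : finrank ℝ (LinearMap.range (phi v s)) = finrank ℝ (s → ℝ) := by
    rw [Module.finrank_pi, Fintype.card_coe]
    omega
  have h4 : LinearMap.range (phi v s) = ⊤ := Submodule.eq_top_of_finrank_eq h3
  obtain ⟨z, hz⟩ := LinearMap.range_eq_top.mp h4 c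
  exact ⟨z, fun j => by simpa [phi] using congrFun hz j⟩


lemma pert (hP : MemPolyClass v P) {x : Eucl n} (hx : x ∈ P) (z : Eucl n)
    (hz : ∀ j, ⟪x, v j⟫ = suppFn P (v j) → ⟪z, v j⟫ ≤ 0) :
    ∃ ε : ℝ, 0 < ε ∧ x + ε • z ∈ P := by
  classical
  set C := Finset.univ.filter (fun j => 0 < ⟪z, v j⟫) with hC
  have hstrict : ∀ j ∈ C, ⟪x, v j⟫ < suppFn P (v j) := by
    intro j hj
    have hzj : 0 < ⟪z, v j⟫ := (Finset.mem_filter.mp hj).2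
    have hle : ⟪x, v j⟫ ≤ suppFn P (v j) := (memP_iff hP).mp hx j
    rcases lt_or_eq_of_le hle with h | h
    · exact h
    · exact absurd (hz j h) (not_le.mpr hzj)
  rcases C.eq_empty_or_nonempty with hCe | hCne
  · refine ⟨1, one_pos, (memP_iff hP).mpr fun j => ?_⟩
    have hzj : ⟪z, v j⟫ ≤ 0 := by
      by_contra hpos
      push_neg at hpos
      have : j ∈ C := Finset.mem_filter.mpr ⟨Finset.mem_univ j, hpos⟩
      rw [hCe] at this
      exact absurd this (Finset.notMem_empty j)
    have : ⟪x + (1:ℝ) • z, v j⟫ = ⟪x, v j⟫ + ⟪z, v j⟫ := by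
      rw [inner_add_left, one_smul]
    rw [this]
    have := (memP_iff hP).mp hx j
    linarith
  · set ε := C.inf' hCne (fun j => (suppFn P (v j) - ⟪x, v j⟫) / ⟪z, v j⟫) with hε
    have hεpos : 0 < ε := by
      rw [hε, Finset.lt_inf'_iff]
      intro j hj
      exact div_pos (by linarith [hstrict j hj]) (Finset.mem_filter.mp hj).2
    refine ⟨ε, hεpos, (memP_iff hP).mpr fun j => ?_⟩
    have hexp : ⟪x + ε • z, v j⟫ = ⟪x, v j⟫ + ε * ⟪z, v j⟫ := by
      rw [inner_add_left, real_inner_smul_left]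
    rw [hexp]
    by_cases hzj : 0 < ⟪z, v j⟫
    · have hjC : j ∈ C := Finset.mem_filter.mpr ⟨Finset.mem_univ j, hzj⟩
      have hεle : ε ≤ (suppFn P (v j) - ⟪x, v j⟫) / ⟪z, v j⟫ := Finset.inf'_le _ hjC
      have : ε * ⟪z, v j⟫ ≤ suppFn P (v j) - ⟪x, v j⟫ := by
        rw [div_eq_mul_inv] at hεle
        calc ε * ⟪z, v j⟫ ≤ ((suppFn P (v j) - ⟪x, v j⟫) * (⟪z, v j⟫)⁻¹) * ⟪z, v j⟫ :=
              mul_le_mul_of_nonneg_right hεle (le_of_lt hzj)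
          _ = suppFn P (v j) - ⟪x, v j⟫ := by
              rw [mul_assoc, inv_mul_cancel₀ (ne_of_gt hzj), mul_one]
      linarith
    · push_neg at hzj
      have h1 : ε * ⟪z, v j⟫ ≤ 0 := mul_nonpos_of_nonneg_of_nonpos (le_of_lt hεpos) hzj
      have := (memP_iff hP).mp hx j
      linarith

lemma pert_seg (hP : MemPolyClass v P) {x : Eucl n} (hx : x ∈ P) {z : Eucl n} {ε : ℝ}
    (hε : 0 < ε) (hmem : x + ε • z ∈ P) :
    ∀ δ : ℝ, 0 ≤ δ → δ ≤ ε → x + δ • z ∈ P := by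
  intro δ hδ0 hδε
  have hconv := hP.2.2.1
  have hcomb := hconv hx hmem (a := 1 - δ/ε) (b := δ/ε)
    (by
      have : δ/ε ≤ 1 := (div_le_one hε).mpr hδε
      linarith)
    (div_nonneg hδ0 (le_of_lt hε)) (by ring)
  have heq : (1 - δ/ε) • x + (δ/ε) • (x + ε • z) = x + δ • z := by
    rw [smul_add, smul_smul, sub_smul, one_smul]
    have : δ / ε * ε = δ := div_mul_cancel₀ δ (ne_of_gt hε)
    rw [this]
    abel
  rw [heq] at hcomb
  exact hcomb

lemma relint_exists (hP : MemPolyClass v P) {G : Set (Eucl n)} (hGP : G ⊆ P)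
    (hGc : Convex ℝ G) (hGne : G.Nonempty) :
    ∃ x ∈ G, ∀ j, (∃ y ∈ G, ⟪y, v j⟫ < suppFn P (v j)) → ⟪x, v j⟫ < suppFn P (v j) := by
  classical
  set C := Finset.univ.filter (fun j => ∃ y ∈ G, ⟪y, v j⟫ < suppFn P (v j)) with hC
  rcases C.eq_empty_or_nonempty with hCe | hCne
  · obtain ⟨x, hx⟩ := hGne
    refine ⟨x, hx, fun j hj => ?_⟩
    have : j ∈ C := Finset.mem_filter.mpr ⟨Finset.mem_univ j, hj⟩
    rw [hCe] at this
    exact absurd this (Finset.notMem_empty j)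
  · have hw : ∀ j ∈ C, ∃ y, y ∈ G ∧ ⟪y, v j⟫ < suppFn P (v j) := by
      intro j hj
      obtain ⟨y, hy, hlt⟩ := (Finset.mem_filter.mp hj).2
      exact ⟨y, hy, hlt⟩
    choose y hyG hyl using hw
    have hcard : (0:ℝ) < C.card := by
      exact_mod_cast Finset.card_pos.mpr hCne
    set w : ℝ := (C.card : ℝ)⁻¹ with hwdef
    have hwpos : 0 < w := inv_pos.mpr hcard
    set x := ∑ j ∈ C.attach, w • y j.1 j.2 with hxdef
    have hsum1 : ∑ _j ∈ C.attach, w = 1 := by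
      rw [Finset.sum_const, Finset.card_attach, nsmul_eq_mul]
      exact mul_inv_cancel₀ (ne_of_gt hcard)
    have hxG : x ∈ G := by
      refine hGc.sum_mem (fun j _ => le_of_lt hwpos) hsum1 (fun j _ => hyG j.1 j.2)
    refine ⟨x, hxG, fun j₀ hj₀ => ?_⟩
    have hj₀C : j₀ ∈ C := Finset.mem_filter.mpr ⟨Finset.mem_univ j₀, hj₀⟩
    have hinner : ⟪x, v j₀⟫ = ∑ j ∈ C.attach, w * ⟪y j.1 j.2, v j₀⟫ := by
      rw [hxdef, sum_inner]
      exact Finset.sum_congr rfl (fun j _ => real_inner_smul_left _ _ _)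
    have hsup : suppFn P (v j₀) = ∑ _j ∈ C.attach, w * suppFn P (v j₀) := by
      rw [← Finset.sum_mul, hsum1, one_mul]
    rw [hinner, hsup]
    refine Finset.sum_lt_sum (fun j _ => ?_) ⟨⟨j₀, hj₀C⟩, Finset.mem_attach _ _, ?_⟩
    · have := (memP_iff hP).mp (hGP (hyG j.1 j.2)) j₀
      exact mul_le_mul_of_nonneg_left this (le_of_lt hwpos)
    · exact (mul_lt_mul_iff_right₀ hwpos).mpr (hyl j₀ hj₀C)

def stdFace (v : Fin N → Eucl n) (P : Set (Eucl n)) (S : Finset (Fin N)) : Set (Eucl n) :=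
  {y | y ∈ P ∧ ∀ j ∈ S, ⟪y, v j⟫ = suppFn P (v j)}

lemma stdFace_subset (S : Finset (Fin N)) : stdFace v P S ⊆ P := fun _ h => h.1

lemma stdFace_mono {S T : Finset (Fin N)} (hST : S ⊆ T) : stdFace v P T ⊆ stdFace v P S :=
  fun y hy => ⟨hy.1, fun j hj => hy.2 j (hST hj)⟩

lemma stdFace_convex (hP : MemPolyClass v P) (S : Finset (Fin N)) :
    Convex ℝ (stdFace v P S) := by
  intro a ha b hb ta tb hta htb hsum
  refine ⟨hP.2.2.1 ha.1 hb.1 hta htb hsum, fun j hj => ?_⟩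
  rw [inner_add_left, real_inner_smul_left, real_inner_smul_left, ha.2 j hj, hb.2 j hj,
    ← add_mul, hsum, one_mul]

lemma vectorSpan_le_orth_span {s : Set (Eucl n)} {Q : Set (Eucl n)}
    (h : ∀ q ∈ Q, ∃ cq : ℝ, ∀ y ∈ s, ⟪y, q⟫ = cq) :
    vectorSpan ℝ s ≤ (span ℝ Q)ᗮ := by
  rw [vectorSpan_def, Submodule.span_le]
  rintro z hz
  rw [Set.mem_vsub] at hz
  obtain ⟨a, ha, b, hb, rfl⟩ := hz
  rw [SetLike.mem_coe, mem_orth_span_iff]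
  intro q hq
  obtain ⟨cq, hcq⟩ := h q hq
  rw [real_inner_comm, show a -ᵥ b = a - b from rfl, inner_sub_left, hcq a ha, hcq b hb,
    sub_self]

lemma stdFace_structure (hgp : InGenPos n N v) (hP : MemPolyClass v P)
    (S : Finset (Fin N))
    (hne : (stdFace v P S).Nonempty) :
    (∃ x, stdFace v P S = {x}) ∨
    (vectorSpan ℝ (stdFace v P S) = (span ℝ (v '' (S : Set (Fin N))))ᗮ ∧
     (S.card ≤ n → finrank ℝ (vectorSpan ℝ (stdFace v P S)) = n - S.card) ∧
     ∃ x ∈ stdFace v P S, ∀ j ∉ S, ⟪x, v j⟫ < suppFn P (v j)) := by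
  classical
  set E := stdFace v P S with hE
  set A := Finset.univ.filter (fun j => ∀ y ∈ E, ⟪y, v j⟫ = suppFn P (v j)) with hA
  have hSsubA : S ⊆ A := by
    intro j hj
    exact Finset.mem_filter.mpr ⟨Finset.mem_univ j, fun y hy => hy.2 j hj⟩
  have hAactive : ∀ j ∈ A, ∀ y ∈ E, ⟪y, v j⟫ = suppFn P (v j) := by
    intro j hj
    exact (Finset.mem_filter.mp hj).2
  -- relint point
  obtain ⟨x, hxE, hxstrict⟩ := relint_exists hP (stdFace_subset S) (stdFace_convex hP S) hne
  have hxs : ∀ j ∉ A, ⟪x, v j⟫ < suppFn P (v j) := by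
    intro j hj
    refine hxstrict j ?_
    by_contra hno
    push_neg at hno
    refine hj (Finset.mem_filter.mpr ⟨Finset.mem_univ j, fun y hy => ?_⟩)
    have hle := (memP_iff hP).mp hy.1 j
    have := hno y hy
    linarith
  -- vectorSpan E = (span (v '' A))ᗮ
  have hle1 : vectorSpan ℝ E ≤ (span ℝ (v '' (A : Set (Fin N))))ᗮ := by
    refine vectorSpan_le_orth_span ?_
    rintro q ⟨j, hj, rfl⟩
    exact ⟨suppFn P (v j), fun y hy => hAactive j hj y hy⟩
  have hle2 : (span ℝ (v '' (A : Set (Fin N))))ᗮ ≤ vectorSpan ℝ E := by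
    intro z hz
    have hzj : ∀ j ∈ A, ⟪z, v j⟫ = 0 := by
      intro j hj
      have := mem_orth_span_iff.mp hz (v j) ⟨j, hj, rfl⟩
      rw [real_inner_comm] at this
      exact this
    rcases eq_or_ne z 0 with rfl | hz0
    · exact Submodule.zero_mem _
    obtain ⟨ε, hεpos, hεmem⟩ := pert hP hxE.1 z (fun j hj => by
      by_cases hjA : j ∈ A
      · exact le_of_eq (hzj j hjA)
      · exact absurd hj (ne_of_lt (hxs j hjA)))
    have hmemE : x + ε • z ∈ E := by
      refine ⟨hεmem, fun j hj => ?_⟩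
      rw [inner_add_left, real_inner_smul_left, hzj j (hSsubA hj), mul_zero, add_zero]
      exact hxE.2 j hj
    have hsub : (x + ε • z) -ᵥ x ∈ vectorSpan ℝ E := vsub_mem_vectorSpan ℝ hmemE hxE
    have heq : (x + ε • z) -ᵥ x = ε • z := by
      show (x + ε • z) - x = ε • z
      abel
    rw [heq] at hsub
    have := Submodule.smul_mem (vectorSpan ℝ E) ε⁻¹ hsub
    rwa [smul_smul, inv_mul_cancel₀ (ne_of_gt hεpos), one_smul] at this
  have hVS : vectorSpan ℝ E = (span ℝ (v '' (A : Set (Fin N))))ᗮ := le_antisymm hle1 hle2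
  by_cases hT : span ℝ (v '' (A : Set (Fin N))) = ⊤
  · left
    refine ⟨x, ?_⟩
    have hbot : vectorSpan ℝ E = ⊥ := by
      rw [hVS, hT, Submodule.top_orthogonal_eq_bot]
    ext y
    simp only [Set.mem_singleton_iff]
    constructor
    · intro hy
      have := vsub_mem_vectorSpan ℝ hy hxE
      rw [hbot, Submodule.mem_bot] at this
      have h2 : y - x = 0 := this
      exact sub_eq_zero.mp h2
    · rintro rfl
      exact hxE
  · -- A = S
    have hAcard : A.card ≤ n := by
      by_contra hbig
      push_neg at hbig
      obtain ⟨t, hts, htc⟩ := Finset.exists_subset_card_eq (le_of_lt hbig) (s := A)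
      have hind := hgp.2.2 t htc
      have hfr : finrank ℝ (span ℝ (v '' (t : Set (Fin N)))) = n := by
        rw [← range_restrict, finrank_span_eq_card hind, Fintype.card_coe, htc]
      have htop : span ℝ (v '' (t : Set (Fin N))) = ⊤ := by
        apply Submodule.eq_top_of_finrank_eq
        rw [hfr, finrank_euclideanSpace_fin]
      have hmono : span ℝ (v '' (t : Set (Fin N))) ≤ span ℝ (v '' (A : Set (Fin N))) :=
        Submodule.span_mono (Set.image_mono hts)
      exact hT (top_le_iff.mp (htop ▸ hmono))
    have hAS : A = S := by
      refine Finset.Subset.antisymm ?_ hSsubA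
      by_contra hno
      obtain ⟨j₀, hj₀A, hj₀S⟩ := Finset.not_subset.mp hno
      obtain ⟨z, hzval⟩ := phi_surj hgp A hAcard
        (fun j => if (j : Fin N) ∈ S then 0 else -1)
      have hzS : ∀ j ∈ S, ⟪z, v j⟫ = 0 := by
        intro j hj
        have := hzval ⟨j, hSsubA hj⟩
        rw [real_inner_comm]
        simpa [hj] using this
      have hzA : ∀ j ∈ A, ⟪z, v j⟫ ≤ 0 := by
        intro j hj
        have hvz := hzval ⟨j, hj⟩
        rw [real_inner_comm, hvz]
        split <;> norm_num
      obtain ⟨ε, hεpos, hεmem⟩ := pert hP hxE.1 z (fun j hj => by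
        by_cases hjA : j ∈ A
        · exact hzA j hjA
        · exact absurd hj (ne_of_lt (hxs j hjA)))
      have hmemE : x + ε • z ∈ E := by
        refine ⟨hεmem, fun j hj => ?_⟩
        rw [inner_add_left, real_inner_smul_left, hzS j hj, mul_zero, add_zero]
        exact hxE.2 j hj
      have hj₀act := hAactive j₀ hj₀A _ hmemE
      have hzj₀ : ⟪z, v j₀⟫ = -1 := by
        have := hzval ⟨j₀, hj₀A⟩
        rw [real_inner_comm]
        simpa [hj₀S] using this
      have hxj₀ : ⟪x, v j₀⟫ = suppFn P (v j₀) := hAactive j₀ hj₀A x hxE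
      rw [inner_add_left, real_inner_smul_left, hzj₀, hxj₀] at hj₀act
      nlinarith
    right
    rw [hAS] at hVS
    refine ⟨hVS, fun hSc => ?_, ⟨x, hxE, fun j hj => hxs j (by rwa [hAS])⟩⟩
    rw [hVS]
    have := Submodule.finrank_add_finrank_orthogonal (span ℝ (v '' (S : Set (Fin N))))
    rw [finrank_span_image hgp hSc, finrank_euclideanSpace_fin] at this
    omega


lemma stdFace_compact (hP : MemPolyClass v P) (S : Finset (Fin N)) :
    IsCompact (stdFace v P S) := by
  have : stdFace v P S = P ∩ ⋂ j ∈ S, {y : Eucl n | ⟪y, v j⟫ = suppFn P (v j)} := by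
    ext y
    simp only [stdFace, Set.mem_inter_iff, Set.mem_iInter, Set.mem_setOf_eq]
  rw [this]
  refine hP.2.1.inter_right ?_
  refine isClosed_biInter (fun j _ => ?_)
  exact isClosed_eq (continuous_id.inner continuous_const) continuous_const

lemma faceIn_eq_stdFace (hP : MemPolyClass v P) (i : Fin N) :
    faceIn P (v i) = stdFace v P {i} := by
  ext y
  simp only [faceIn, stdFace, Set.mem_inter_iff, Set.mem_setOf_eq, Finset.mem_singleton]
  constructor
  · rintro ⟨h1, h2⟩
    exact ⟨h1, fun j hj => by rw [hj]; exact h2⟩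
  · rintro ⟨h1, h2⟩
    exact ⟨h1, h2 i rfl⟩

lemma stdFace_singleton_nonempty (hP : MemPolyClass v P) (i : Fin N) :
    (stdFace v P {i}).Nonempty := by
  obtain ⟨x, hx, hxe⟩ := supp_mem hP.1 hP.2.1 (v i)
  exact ⟨x, hx, fun j hj => by rw [Finset.mem_singleton] at hj; rw [hj]; exact hxe⟩

lemma mem_stdFace_pair {i j : Fin N} {y : Eucl n} :
    y ∈ stdFace v P {i, j} ↔
      y ∈ P ∧ ⟪y, v i⟫ = suppFn P (v i) ∧ ⟪y, v j⟫ = suppFn P (v j) := by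
  simp only [stdFace, Set.mem_setOf_eq, Finset.mem_insert, Finset.mem_singleton]
  constructor
  · rintro ⟨h1, h2⟩
    exact ⟨h1, h2 i (Or.inl rfl), h2 j (Or.inr rfl)⟩
  · rintro ⟨h1, h2, h3⟩
    refine ⟨h1, fun k hk => ?_⟩
    rcases hk with rfl | rfl
    · exact h2
    · exact h3

lemma card_pair {i j : Fin N} (hji : j ≠ i) : ({i, j} : Finset (Fin N)).card = 2 := by
  rw [Finset.card_insert_of_notMem (by simp [Ne.symm hji]), Finset.card_singleton]

lemma image_pair {i j : Fin N} :
    v '' (({i, j} : Finset (Fin N)) : Set (Fin N)) = {v i, v j} := by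
  rw [Finset.coe_insert, Set.image_insert_eq, Finset.coe_singleton, Set.image_singleton]

lemma dual_pair (hgp : InGenPos n N v) (hn2 : 2 ≤ n) {i j : Fin N} (hji : j ≠ i) :
    ∃ z : Eucl n, ⟪v i, z⟫ = 0 ∧ ⟪v j, z⟫ = 1 := by
  have hc2 : ({i, j} : Finset (Fin N)).card ≤ n := by rw [card_pair hji]; exact hn2
  obtain ⟨z, hz⟩ := phi_surj hgp {i, j} hc2 (fun k => if (k : Fin N) = j then 1 else 0)
  have hi : ⟪v i, z⟫ = 0 := by
    have := hz ⟨i, Finset.mem_insert_self i {j}⟩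
    simpa [Ne.symm hji] using this
  have hj : ⟪v j, z⟫ = 1 := by
    have := hz ⟨j, Finset.mem_insert_of_mem (Finset.mem_singleton_self j)⟩
    simpa using this
  exact ⟨z, hi, hj⟩

lemma pair_sub_ne_zero (hgp : InGenPos n N v) (hn2 : 2 ≤ n) {i j : Fin N} (hji : j ≠ i) :
    v j - ⟪v j, v i⟫ • v i ≠ 0 := by
  intro h0
  obtain ⟨z, hzi, hzj⟩ := dual_pair hgp hn2 hji
  have hvj : v j = ⟪v j, v i⟫ • v i := by
    have := sub_eq_zero.mp h0
    exact this
  rw [hvj, real_inner_smul_left, hzi, mul_zero] at hzj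
  exact one_ne_zero hzj.symm

lemma facet_normal_of_good (hgp : InGenPos n N v) (hP : MemPolyClass v P) (hn2 : 2 ≤ n)
    {i j : Fin N} (hji : j ≠ i)
    (hface : finrank ℝ (vectorSpan ℝ (faceIn P (v i))) = n - 1)
    (hE2 : (stdFace v P {i, j}).Nonempty)
    (hE2d : finrank ℝ (vectorSpan ℝ (stdFace v P {i, j})) = n - 2) :
    ∃ u ∈ facetNormalsIn (v i) (faceIn P (v i)),
      ∃ r : ℝ, 0 < r ∧ u = r • (v j - ⟪v j, v i⟫ • v i) := by
  set c := ⟪v j, v i⟫ with hc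
  set p := v j - c • v i with hp
  have hpne : p ≠ 0 := pair_sub_ne_zero hgp hn2 hji
  have hpn : ‖p‖ ≠ 0 := norm_ne_zero_iff.mpr hpne
  have hpnpos : 0 < ‖p‖ := norm_pos_iff.mpr hpne
  set u := ‖p‖⁻¹ • p with hu
  have hvii : ⟪v i, v i⟫ = 1 := by
    rw [real_inner_self_eq_norm_sq, hgp.1 i, one_pow]
  have hui0 : ⟪u, v i⟫ = 0 := by
    rw [hu, real_inner_smul_left, hp, inner_sub_left, real_inner_smul_left, hvii]
    ring
  have hunorm : ‖u‖ = 1 := by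
    rw [hu, norm_smul, norm_inv, norm_norm, inv_mul_cancel₀ hpn]
  set F := faceIn P (v i) with hFdef
  have hF : F = stdFace v P {i} := faceIn_eq_stdFace hP i
  have hFne : F.Nonempty := by rw [hF]; exact stdFace_singleton_nonempty hP i
  have hFco : IsCompact F := by rw [hF]; exact stdFace_compact hP _
  have hFP : F ⊆ P := by rw [hF]; exact stdFace_subset _
  have hyF : ∀ y ∈ F, ⟪y, v i⟫ = suppFn P (v i) := by
    intro y hy
    rw [hF] at hy
    exact hy.2 i (Finset.mem_singleton_self i)
  set m := ‖p‖⁻¹ * (suppFn P (v j) - c * suppFn P (v i)) with hm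
  have hval : ∀ y ∈ F, ⟪y, u⟫ = ‖p‖⁻¹ * (⟪y, v j⟫ - c * suppFn P (v i)) := by
    intro y hy
    rw [hu, real_inner_smul_right, hp, inner_sub_right, real_inner_smul_right, hyF y hy]
  have hgreat : IsGreatest ((fun y => ⟪y, u⟫) '' F) m := by
    constructor
    · obtain ⟨y₀, hy₀⟩ := hE2
      rw [mem_stdFace_pair] at hy₀
      have hy₀F : y₀ ∈ F := by
        rw [hF]
        exact ⟨hy₀.1, fun k hk => by rw [Finset.mem_singleton] at hk; rw [hk]; exact hy₀.2.1⟩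
      exact ⟨y₀, hy₀F, by show ⟪y₀, u⟫ = m; rw [hval y₀ hy₀F, hy₀.2.2]⟩
    · rintro _ ⟨y, hy, rfl⟩
      show ⟪y, u⟫ ≤ m
      rw [hval y hy, hm]
      have := (memP_iff hP).mp (hFP hy) j
      have h2 : ⟪y, v j⟫ - c * suppFn P (v i) ≤ suppFn P (v j) - c * suppFn P (v i) := by
        linarith
      exact mul_le_mul_of_nonneg_left h2 (le_of_lt (inv_pos.mpr hpnpos))
  have hsupp : suppFn F u = m := hgreat.csSup_eq
  have hfaceEq : faceIn F u = stdFace v P {i, j} := by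
    ext y
    constructor
    · rintro ⟨hyFm, hyeq⟩
      rw [Set.mem_setOf_eq, hsupp, hval y hyFm, hm] at hyeq
      have hj' : ⟪y, v j⟫ = suppFn P (v j) := by
        have := mul_left_cancel₀ (inv_ne_zero hpn) hyeq
        linarith
      exact mem_stdFace_pair.mpr ⟨hFP hyFm, hyF y hyFm, hj'⟩
    · intro hy
      rw [mem_stdFace_pair] at hy
      have hyF' : y ∈ F := by
        rw [hF]
        exact ⟨hy.1, fun k hk => by rw [Finset.mem_singleton] at hk; rw [hk]; exact hy.2.1⟩
      refine ⟨hyF', ?_⟩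
      rw [Set.mem_setOf_eq, hsupp, hval y hyF', hy.2.2]
  refine ⟨u, ⟨hui0, hunorm, ?_⟩, ‖p‖⁻¹, inv_pos.mpr hpnpos, rfl⟩
  rw [hfaceEq, hE2d, hface]
  omega


lemma inner_self_vi (hgp : InGenPos n N v) (i : Fin N) : ⟪v i, v i⟫ = 1 := by
  rw [real_inner_self_eq_norm_sq, hgp.1 i, one_pow]

lemma convex_inner_eq (q : Eucl n) (cc : ℝ) : Convex ℝ {y : Eucl n | ⟪y, q⟫ = cc} := by
  intro a ha b hb ta tb hta htb hsum
  simp only [Set.mem_setOf_eq] at *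
  rw [inner_add_left, real_inner_smul_left, real_inner_smul_left, ha, hb, ← add_mul, hsum,
    one_mul]

lemma facet_normal_repr (hgp : InGenPos n N v) (hP : MemPolyClass v P) (hn3 : 3 ≤ n)
    (i : Fin N)
    (hface : finrank ℝ (vectorSpan ℝ (faceIn P (v i))) = n - 1)
    {u : Eucl n} (hu : u ∈ facetNormalsIn (v i) (faceIn P (v i))) :
    ∃ j : Fin N, j ≠ i ∧ (stdFace v P {i, j}).Nonempty ∧
      finrank ℝ (vectorSpan ℝ (stdFace v P {i, j})) = n - 2 ∧
      u = ‖v j - ⟪v j, v i⟫ • v i‖⁻¹ • (v j - ⟪v j, v i⟫ • v i) := by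
  obtain ⟨hui0, hunorm, hudim⟩ := hu
  set F := faceIn P (v i) with hFdef
  have hF : F = stdFace v P {i} := faceIn_eq_stdFace hP i
  have hFne : F.Nonempty := by rw [hF]; exact stdFace_singleton_nonempty hP i
  have hFco : IsCompact F := by rw [hF]; exact stdFace_compact hP _
  have hFP : F ⊆ P := by rw [hF]; exact stdFace_subset _
  have hFconv : Convex ℝ F := by rw [hF]; exact stdFace_convex hP _
  have hyF : ∀ y ∈ F, ⟪y, v i⟫ = suppFn P (v i) := by
    intro y hy
    rw [hF] at hy
    exact hy.2 i (Finset.mem_singleton_self i)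
  set G := faceIn F u with hGdef
  have hGne : G.Nonempty := by
    obtain ⟨y, hy, he⟩ := supp_mem hFne hFco u
    exact ⟨y, hy, he⟩
  have hGF : G ⊆ F := Set.inter_subset_left
  have hGP : G ⊆ P := fun y hy => hFP (hGF hy)
  have hGconv : Convex ℝ G := hFconv.inter (convex_inner_eq u (suppFn F u))
  have hGi : ∀ y ∈ G, ⟪y, v i⟫ = suppFn P (v i) := fun y hy => hyF y (hGF hy)
  obtain ⟨x, hxG, hxst⟩ := relint_exists hP hGP hGconv hGne
  have hxu : ⟪x, u⟫ = suppFn F u := hxG.2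
  have hexj : ∃ j, j ≠ i ∧ ∀ y ∈ G, ⟪y, v j⟫ = suppFn P (v j) := by
    by_contra hno
    push_neg at hno
    have hxstrict : ∀ j, j ≠ i → ⟪x, v j⟫ < suppFn P (v j) := by
      intro j hj
      obtain ⟨y, hyG, hyne⟩ := hno j hj
      exact hxst j ⟨y, hyG, lt_of_le_of_ne ((memP_iff hP).mp (hGP hyG) j) hyne⟩
    have hker : ∀ z : Eucl n, ⟪z, v i⟫ = 0 → ⟪z, u⟫ = 0 := by
      intro z hzi
      have hcnd : ∀ z' : Eucl n, ⟪z', v i⟫ = 0 →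
          ∀ j, ⟪x, v j⟫ = suppFn P (v j) → ⟪z', v j⟫ ≤ 0 := by
        intro z' hz' j hj
        by_cases hji' : j = i
        · subst hji'; rw [hz']
        · exact absurd hj (ne_of_lt (hxstrict j hji'))
      obtain ⟨ε₁, hε₁, hm1⟩ := pert hP (hGP hxG) z (hcnd z hzi)
      obtain ⟨ε₂, hε₂, hm2⟩ := pert hP (hGP hxG) (-z)
        (hcnd (-z) (by rw [inner_neg_left, hzi, neg_zero]))
      have hmF1 : x + ε₁ • z ∈ F := by
        rw [hF]
        refine ⟨hm1, fun k hk => ?_⟩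
        rw [Finset.mem_singleton] at hk
        subst hk
        rw [inner_add_left, real_inner_smul_left, hzi, mul_zero, add_zero]
        exact hGi x hxG
      have hmF2 : x + ε₂ • (-z) ∈ F := by
        rw [hF]
        refine ⟨hm2, fun k hk => ?_⟩
        rw [Finset.mem_singleton] at hk
        subst hk
        rw [inner_add_left, real_inner_smul_left, inner_neg_left, hzi, neg_zero, mul_zero,
          add_zero]
        exact hGi x hxG
      have hle1 := supp_le hFne hFco hmF1 u
      have hle2 := supp_le hFne hFco hmF2 u
      rw [inner_add_left, real_inner_smul_left, hxu] at hle1 hle2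
      rw [inner_neg_left] at hle2
      nlinarith
    have humem : u ∈ (span ℝ {v i} : Submodule ℝ (Eucl n)) := by
      have h1 : u ∈ ((span ℝ {v i} : Submodule ℝ (Eucl n))ᗮ)ᗮ := by
        rw [Submodule.mem_orthogonal]
        intro z hz
        exact hker z (Submodule.mem_orthogonal_singleton_iff_inner_left.mp hz)
      rwa [Submodule.orthogonal_orthogonal] at h1
    obtain ⟨a, ha⟩ := Submodule.mem_span_singleton.mp humem
    have ha0 : a = 0 := by
      have h2 := hui0
      rw [← ha, real_inner_smul_left, inner_self_vi hgp i, mul_one] at h2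
      exact h2
    rw [ha0, zero_smul] at ha
    rw [← ha] at hunorm
    simp at hunorm
  obtain ⟨j, hji, hjact⟩ := hexj
  set E2 := stdFace v P {i, j} with hE2def
  have hGE : G ⊆ E2 := fun y hy => mem_stdFace_pair.mpr ⟨hGP hy, hGi y hy, hjact y hy⟩
  have hE2ne : E2.Nonempty := hGne.mono hGE
  have hudim' : finrank ℝ (vectorSpan ℝ G) = n - 2 := by
    rw [hudim, hface]
    omega
  have hWle : vectorSpan ℝ E2 ≤ (span ℝ ({v i, v j} : Set (Eucl n)))ᗮ := by
    apply vectorSpan_le_orth_span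
    rintro q hq
    rcases hq with rfl | hq
    · exact ⟨suppFn P (v i), fun y hy => (mem_stdFace_pair.mp hy).2.1⟩
    · rw [Set.mem_singleton_iff] at hq
      subst hq
      exact ⟨suppFn P (v j), fun y hy => (mem_stdFace_pair.mp hy).2.2⟩
  have hfr2 : finrank ℝ (span ℝ ({v i, v j} : Set (Eucl n))) = 2 := by
    have h2 := finrank_span_image hgp (A := {i, j}) (by rw [card_pair hji]; omega)
    rwa [image_pair, card_pair hji] at h2
  have hfrW : finrank ℝ ((span ℝ ({v i, v j} : Set (Eucl n)))ᗮ) = n - 2 := by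
    have h3 := Submodule.finrank_add_finrank_orthogonal (span ℝ ({v i, v j} : Set (Eucl n)))
    rw [hfr2, finrank_euclideanSpace_fin] at h3
    omega
  have hGEvs : vectorSpan ℝ G ≤ (span ℝ ({v i, v j} : Set (Eucl n)))ᗮ :=
    le_trans (vectorSpan_mono ℝ hGE) hWle
  have hGW : vectorSpan ℝ G = (span ℝ ({v i, v j} : Set (Eucl n)))ᗮ :=
    Submodule.eq_of_le_of_finrank_le hGEvs (by rw [hfrW, hudim'])
  have hE2dim : finrank ℝ (vectorSpan ℝ E2) = n - 2 := by
    have hle1 := Submodule.finrank_mono (vectorSpan_mono ℝ hGE)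
    have hle2 := Submodule.finrank_mono hWle
    rw [hudim'] at hle1
    rw [hfrW] at hle2
    omega
  have humem : u ∈ span ℝ ({v i, v j} : Set (Eucl n)) := by
    have h1 : u ∈ (vectorSpan ℝ G)ᗮ := by
      rw [Submodule.mem_orthogonal]
      intro z hz
      have hsub : vectorSpan ℝ G ≤ (span ℝ ({u} : Set (Eucl n)))ᗮ := by
        apply vectorSpan_le_orth_span
        rintro q hq
        rw [Set.mem_singleton_iff] at hq
        refine ⟨suppFn F u, fun y hy => ?_⟩
        rw [hq]
        exact hy.2
      exact Submodule.mem_orthogonal_singleton_iff_inner_left.mp (hsub hz)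
    rw [hGW] at h1
    rwa [Submodule.orthogonal_orthogonal] at h1
  obtain ⟨a, b, hab⟩ := Submodule.mem_span_pair.mp humem
  set c := ⟪v j, v i⟫ with hcq
  have ha0 : a + b * c = 0 := by
    have h2 := hui0
    rw [← hab, inner_add_left, real_inner_smul_left, real_inner_smul_left,
      inner_self_vi hgp i, mul_one] at h2
    rw [hcq]
    exact h2
  set p := v j - c • v i with hpdef
  have hpu : u = b • p := by
    rw [← hab, hpdef, smul_sub, smul_smul]
    have haeq : a = -(b * c) := by linarith
    rw [haeq, neg_smul]
    abel
  have hpne : p ≠ 0 := by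
    intro h0
    rw [h0, smul_zero] at hpu
    rw [hpu] at hunorm
    simp at hunorm
  have hpn : ‖p‖ ≠ 0 := norm_ne_zero_iff.mpr hpne
  have hpnpos : 0 < ‖p‖ := norm_pos_iff.mpr hpne
  have hbn : |b| = ‖p‖⁻¹ := by
    rw [hpu, norm_smul, Real.norm_eq_abs] at hunorm
    field_simp at hunorm ⊢
    linarith
  rcases (abs_eq (le_of_lt (inv_pos.mpr hpnpos))).mp hbn with hb | hb
  · exact ⟨j, hji, hE2ne, hE2dim, by rw [hpu, hb]⟩
  · exfalso
    obtain ⟨y₀, hy₀G⟩ := hGne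
    have hy₀E2 := hGE hy₀G
    have hsupval : suppFn F u = ⟪y₀, u⟫ := (hy₀G.2).symm
    have hyp_of_mem : ∀ y ∈ F, ⟪y, p⟫ = ⟪y, v j⟫ - c * suppFn P (v i) := by
      intro y hy
      rw [hpdef, inner_sub_right, real_inner_smul_right, hyF y hy]
    have hy₀p : ⟪y₀, p⟫ = suppFn P (v j) - c * suppFn P (v i) := by
      rw [hyp_of_mem y₀ (hGF hy₀G), (mem_stdFace_pair.mp hy₀E2).2.2]
    have hbneg : b < 0 := by
      rw [hb]
      simp [inv_pos.mpr hpnpos]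
    have hallj : ∀ y ∈ F, ⟪y, v j⟫ = suppFn P (v j) := by
      intro y hyF'
      have hle' := supp_le hFne hFco hyF' u
      rw [hsupval, hpu, real_inner_smul_right, real_inner_smul_right] at hle'
      have hge : ⟪y₀, p⟫ ≤ ⟪y, p⟫ := by nlinarith
      rw [hy₀p, hyp_of_mem y hyF'] at hge
      have hle2 := (memP_iff hP).mp (hFP hyF') j
      linarith
    have hvsle : vectorSpan ℝ F ≤ (span ℝ ({v i, v j} : Set (Eucl n)))ᗮ := by
      apply vectorSpan_le_orth_span
      rintro q hq
      rcases hq with rfl | hq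
      · exact ⟨suppFn P (v i), fun y hy => hyF y hy⟩
      · rw [Set.mem_singleton_iff] at hq
        subst hq
        exact ⟨suppFn P (v j), fun y hy => hallj y hy⟩
    have hmono := Submodule.finrank_mono hvsle
    rw [hface, hfrW] at hmono
    omega


lemma pair_dichotomy (hgp : InGenPos n N v) (hP : MemPolyClass v P) (hn2 : 2 ≤ n)
    {i j : Fin N} (hji : j ≠ i) (hne : (stdFace v P {i, j}).Nonempty) :
    (∃ x, stdFace v P {i, j} = {x}) ∨
      finrank ℝ (vectorSpan ℝ (stdFace v P {i, j})) = n - 2 := by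
  rcases stdFace_structure hgp hP {i, j} hne with h | ⟨_, hfr, _⟩
  · left; exact h
  · right
    have h2 := hfr (by rw [card_pair hji]; omega)
    rwa [card_pair hji] at h2

lemma line_null {k : ℕ} (hk2 : 2 ≤ k) (q e : EuclideanSpace ℝ (Fin k)) :
    volume {t : EuclideanSpace ℝ (Fin k) | ∃ s : ℝ, t = q + s • e} = 0 := by
  have hne : span ℝ ({e} : Set (EuclideanSpace ℝ (Fin k))) ≠ ⊤ := by
    intro htop
    have hfr : finrank ℝ (span ℝ ({e} : Set (EuclideanSpace ℝ (Fin k)))) = k := by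
      rw [htop, finrank_top, finrank_euclideanSpace_fin]
    rcases eq_or_ne e 0 with rfl | he
    · rw [Submodule.span_zero_singleton, finrank_bot] at hfr
      omega
    · rw [finrank_span_singleton he] at hfr
      omega
  have hsub : {t : EuclideanSpace ℝ (Fin k) | ∃ s : ℝ, t = q + s • e} ⊆
      (fun z => -q + z) ⁻¹'
        ((span ℝ ({e} : Set (EuclideanSpace ℝ (Fin k)))) : Set (EuclideanSpace ℝ (Fin k))) := by
    rintro t ⟨s, rfl⟩
    simp only [Set.mem_preimage, SetLike.mem_coe]
    have h4 : -q + (q + s • e) = s • e := by abel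
    rw [h4]
    exact Submodule.smul_mem _ s (Submodule.mem_span_singleton_self e)
  refine le_antisymm ?_ (zero_le)
  calc volume {t : EuclideanSpace ℝ (Fin k) | ∃ s : ℝ, t = q + s • e}
      ≤ volume ((fun z => -q + z) ⁻¹'
          ((span ℝ ({e} : Set (EuclideanSpace ℝ (Fin k)))) :
            Set (EuclideanSpace ℝ (Fin k)))) := measure_mono hsub
    _ = volume ((span ℝ ({e} : Set (EuclideanSpace ℝ (Fin k)))) :
          Set (EuclideanSpace ℝ (Fin k))) := measure_preimage_add _ _ _
    _ = 0 := Measure.addHaar_submodule volume _ hne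

lemma hemisphere_part (hgp : InGenPos n N v) (hP : MemPolyClass v P) (hn3 : 3 ≤ n)
    (i : Fin N)
    (hface : finrank ℝ (vectorSpan ℝ (faceIn P (v i))) = n - 1)
    (w : Eucl n) (hw0 : ⟪w, v i⟫ = 0) (hwne : w ≠ 0) :
    ∃ u ∈ facetNormalsIn (v i) (faceIn P (v i)), ⟪u, w⟫ < 0 := by
  classical
  by_contra hcon
  push_neg at hcon
  set d : Eucl n := -w with hd
  have hdne : d ≠ 0 := neg_ne_zero.mpr hwne
  have hdvi : ⟪d, v i⟫ = 0 := by rw [hd, inner_neg_left, hw0, neg_zero]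
  have hvid : ⟪v i, d⟫ = 0 := by rw [real_inner_comm]; exact hdvi
  have hbad : ∀ j : Fin N, 0 < ⟪v j, d⟫ → (stdFace v P {i, j}).Nonempty →
      ∃ p, stdFace v P {i, j} = {p} := by
    intro j hjd hjne
    have hji : j ≠ i := by
      intro h
      subst h
      rw [hvid] at hjd
      exact lt_irrefl 0 hjd
    rcases pair_dichotomy hgp hP (by omega) hji hjne with h | h
    · exact h
    · exfalso
      obtain ⟨u, huFN, r, hr, hur⟩ := facet_normal_of_good hgp hP (by omega) hji hface hjne h
      have hviw : ⟪v i, w⟫ = 0 := by rw [real_inner_comm]; exact hw0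
      have hvjw : ⟪v j, w⟫ < 0 := by
        have h5 : ⟪v j, d⟫ = -⟪v j, w⟫ := by rw [hd, inner_neg_right]
        rw [h5] at hjd
        linarith
      have huw : ⟪u, w⟫ < 0 := by
        rw [hur, real_inner_smul_left, inner_sub_left, real_inner_smul_left, hviw, mul_zero,
          sub_zero]
        exact mul_neg_of_pos_of_neg hr hvjw
      exact absurd huw (not_lt.mpr (hcon u huFN))
  -- relint point of F
  have hFne := stdFace_singleton_nonempty hP i
  rcases stdFace_structure hgp hP {i} hFne with ⟨x', hsing⟩ | ⟨hVSF, _, x₀, hx₀, hx₀st⟩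
  · rw [faceIn_eq_stdFace hP i, hsing, vectorSpan_singleton, finrank_bot] at hface
    omega
  have hstr : ∀ j, j ≠ i → ⟪x₀, v j⟫ < suppFn P (v j) := by
    intro j hj
    exact hx₀st j (by simpa using hj)
  have hx₀i : ⟪x₀, v i⟫ = suppFn P (v i) := hx₀.2 i (Finset.mem_singleton_self i)
  set U : Set (Eucl n) :=
    ⋂ j ∈ Finset.univ.erase i, {y : Eucl n | ⟪y, v j⟫ < suppFn P (v j)} with hU
  have hUopen : IsOpen U :=
    isOpen_biInter_finset (fun j _ =>
      isOpen_lt (continuous_id.inner continuous_const) continuous_const)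
  have hx₀U : x₀ ∈ U := by
    rw [hU]
    simp only [Set.mem_iInter, Set.mem_setOf_eq]
    intro j hj
    exact hstr j (Finset.ne_of_mem_erase hj)
  obtain ⟨ρ, hρpos, hρsub⟩ := Metric.isOpen_iff.mp hUopen x₀ hx₀U
  set Jp := Finset.univ.filter (fun j => 0 < ⟪v j, d⟫) with hJp
  have hJpne : Jp.Nonempty := by
    obtain ⟨j, hj⟩ := hgp.2.1 (-d) (neg_ne_zero.mpr hdne)
    refine ⟨j, Finset.mem_filter.mpr ⟨Finset.mem_univ j, ?_⟩⟩
    rw [inner_neg_right] at hj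
    linarith
  set pf : Fin N → Eucl n := fun j =>
    if h : 0 < ⟪v j, d⟫ ∧ (stdFace v P {i, j}).Nonempty then (hbad j h.1 h.2).choose
    else 0 with hpfdef
  have hpf : ∀ j, (h1 : 0 < ⟪v j, d⟫) → (h2 : (stdFace v P {i, j}).Nonempty) →
      stdFace v P {i, j} = {pf j} := by
    intro j h1 h2
    have hd1 : pf j = (hbad j h1 h2).choose := by
      simp only [hpfdef]
      rw [dif_pos (⟨h1, h2⟩ : 0 < ⟪v j, d⟫ ∧ (stdFace v P {i, j}).Nonempty)]
    rw [hd1]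
    exact (hbad j h1 h2).choose_spec
  have hcover : ∀ x, x ∈ ball x₀ ρ → ⟪x, v i⟫ = suppFn P (v i) →
      ∃ j ∈ Jp, ∃ t : ℝ, x = pf j + t • d := by
    intro x hxball hxi
    have hxU := hρsub hxball
    rw [hU] at hxU
    simp only [Set.mem_iInter, Set.mem_setOf_eq] at hxU
    have hxstrict : ∀ j, j ≠ i → ⟪x, v j⟫ < suppFn P (v j) := by
      intro j hj
      exact hxU j (Finset.mem_erase.mpr ⟨hj, Finset.mem_univ j⟩)
    have hxP : x ∈ P := (memP_iff hP).mpr (fun j => by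
      by_cases hji' : j = i
      · subst hji'; exact le_of_eq hxi
      · exact le_of_lt (hxstrict j hji'))
    set f : Fin N → ℝ := fun j => (suppFn P (v j) - ⟪x, v j⟫) / ⟪v j, d⟫ with hf
    set t₀ := Jp.inf' hJpne f with ht₀
    have ht₀pos : 0 < t₀ := by
      show 0 < Jp.inf' hJpne f
      refine (Finset.lt_inf'_iff hJpne).mpr (fun j hj => ?_)
      have hjd := (Finset.mem_filter.mp hj).2
      have hji' : j ≠ i := by
        intro h
        subst h
        rw [hvid] at hjd
        exact lt_irrefl 0 hjd
      exact div_pos (by linarith [hxstrict j hji']) hjd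
    obtain ⟨j₀, hj₀Jp, hj₀eq⟩ := Finset.exists_mem_eq_inf' hJpne f
    have hj₀d := (Finset.mem_filter.mp hj₀Jp).2
    set y := x + t₀ • d with hy
    have hyval : ∀ j, ⟪y, v j⟫ = ⟪x, v j⟫ + t₀ * ⟪v j, d⟫ := by
      intro j
      rw [hy, inner_add_left, real_inner_smul_left, real_inner_comm d (v j)]
    have hyP : y ∈ P := (memP_iff hP).mpr (fun j => by
      rw [hyval j]
      by_cases hjd' : 0 < ⟪v j, d⟫
      · have hjJp : j ∈ Jp := Finset.mem_filter.mpr ⟨Finset.mem_univ j, hjd'⟩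
        have hle : t₀ ≤ f j := Finset.inf'_le _ hjJp
        have h6 : t₀ * ⟪v j, d⟫ ≤ f j * ⟪v j, d⟫ :=
          mul_le_mul_of_nonneg_right hle (le_of_lt hjd')
        have h7 : f j * ⟪v j, d⟫ = suppFn P (v j) - ⟪x, v j⟫ :=
          div_mul_cancel₀ _ (ne_of_gt hjd')
        rw [h7] at h6
        linarith
      · push_neg at hjd'
        have h8 : t₀ * ⟪v j, d⟫ ≤ 0 :=
          mul_nonpos_of_nonneg_of_nonpos (le_of_lt ht₀pos) hjd'
        have := (memP_iff hP).mp hxP j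
        linarith)
    have hyi : ⟪y, v i⟫ = suppFn P (v i) := by
      rw [hyval i, hvid, mul_zero, add_zero]
      exact hxi
    have hyj₀ : ⟪y, v j₀⟫ = suppFn P (v j₀) := by
      rw [hyval j₀, ht₀, hj₀eq]
      simp only [hf]
      have h9 : (suppFn P (v j₀) - ⟪x, v j₀⟫) / ⟪v j₀, d⟫ * ⟪v j₀, d⟫
          = suppFn P (v j₀) - ⟪x, v j₀⟫ := div_mul_cancel₀ _ (ne_of_gt hj₀d)
      rw [h9]
      ring
    have hyface : y ∈ stdFace v P {i, j₀} := mem_stdFace_pair.mpr ⟨hyP, hyi, hyj₀⟩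
    have hsingle := hpf j₀ hj₀d ⟨y, hyface⟩
    have hype : y = pf j₀ := by
      rw [hsingle] at hyface
      exact hyface
    refine ⟨j₀, hj₀Jp, -t₀, ?_⟩
    rw [← hype, hy, neg_smul]
    abel
  -- measure-theoretic contradiction
  set V := (span ℝ ({v i} : Set (Eucl n)))ᗮ with hV
  have hdV : d ∈ V := Submodule.mem_orthogonal_singleton_iff_inner_left.mpr hdvi
  have hvine : v i ≠ 0 := by
    intro h0
    have := hgp.1 i
    rw [h0, norm_zero] at this
    norm_num at this
  have hfrV : 2 ≤ finrank ℝ V := by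
    have h1 := Submodule.finrank_add_finrank_orthogonal (span ℝ ({v i} : Set (Eucl n)))
    rw [finrank_span_singleton hvine, finrank_euclideanSpace_fin, ← hV] at h1
    omega
  set ψ := (stdOrthonormalBasis ℝ V).repr with hψ
  set g : EuclideanSpace ℝ (Fin (finrank ℝ V)) → Eucl n :=
    fun t => x₀ + ((ψ.symm t : V) : Eucl n) with hg
  set Lset : Fin N → Set (EuclideanSpace ℝ (Fin (finrank ℝ V))) :=
    fun j => {t | ∃ s : ℝ, ((ψ.symm t : V) : Eucl n) = (pf j - x₀) + s • d} with hLset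
  have hballsub : ball (0 : EuclideanSpace ℝ (Fin (finrank ℝ V))) ρ ⊆ ⋃ j ∈ Jp, Lset j := by
    intro t ht
    have htd : dist (g t) x₀ < ρ := by
      rw [hg]
      simp only
      rw [dist_eq_norm, add_sub_cancel_left]
      have h2 : ‖((ψ.symm t : V) : Eucl n)‖ = ‖ψ.symm t‖ := (Submodule.coe_norm _).symm
      rw [h2, LinearIsometryEquiv.norm_map]
      rw [mem_ball, dist_zero_right] at ht
      exact ht
    have hgi : ⟪g t, v i⟫ = suppFn P (v i) := by
      rw [hg]
      simp only
      rw [inner_add_left]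
      have h3 : ⟪((ψ.symm t : V) : Eucl n), v i⟫ = 0 :=
        Submodule.mem_orthogonal_singleton_iff_inner_left.mp (ψ.symm t).2
      rw [h3, add_zero]
      exact hx₀i
    obtain ⟨j, hjJp, s, hs⟩ := hcover (g t) (mem_ball.mpr htd) hgi
    refine Set.mem_biUnion hjJp ?_
    refine ⟨s, ?_⟩
    have h4 : ((ψ.symm t : V) : Eucl n) = g t - x₀ := by rw [hg]; simp only; abel
    rw [h4, hs]
    abel
  have hLnull : ∀ j ∈ Jp, volume (Lset j) = 0 := by
    intro j _
    by_cases hmemV : pf j - x₀ ∈ V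
    · have hsub2 : Lset j ⊆ {t | ∃ s : ℝ,
          t = ψ ⟨pf j - x₀, hmemV⟩ + s • ψ ⟨d, hdV⟩} := by
        rintro t ⟨s, hts⟩
        refine ⟨s, ?_⟩
        have h5 : ψ.symm t = ⟨pf j - x₀, hmemV⟩ + s • (⟨d, hdV⟩ : V) := by
          apply Subtype.coe_injective
          show ((ψ.symm t : V) : Eucl n) = ((⟨pf j - x₀, hmemV⟩ + s • (⟨d, hdV⟩ : V) : V) : Eucl n)
          rw [hts]
          rfl
        have h6 := congrArg ψ h5
        rw [LinearIsometryEquiv.apply_symm_apply] at h6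
        rw [h6, map_add, LinearIsometryEquiv.map_smul]
      exact le_antisymm
        (le_trans (measure_mono hsub2) (le_of_eq (line_null hfrV _ _))) (zero_le)
    · have : Lset j = ∅ := by
        ext t
        simp only [hLset, Set.mem_setOf_eq, Set.mem_empty_iff_false, iff_false]
        rintro ⟨s, hts⟩
        apply hmemV
        have h7 : pf j - x₀ = ((ψ.symm t : V) : Eucl n) - s • d := by
          rw [hts]; abel
        rw [h7]
        exact Submodule.sub_mem _ (ψ.symm t).2 (Submodule.smul_mem _ s hdV)
      rw [this, measure_empty]
  have hfinal : volume (ball (0 : EuclideanSpace ℝ (Fin (finrank ℝ V))) ρ) = 0 := by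
    refine le_antisymm ?_ (zero_le)
    calc volume (ball (0 : EuclideanSpace ℝ (Fin (finrank ℝ V))) ρ)
        ≤ volume (⋃ j ∈ Jp, Lset j) := measure_mono hballsub
      _ ≤ ∑ j ∈ Jp, volume (Lset j) := measure_biUnion_finset_le _ _
      _ = 0 := Finset.sum_eq_zero hLnull
  have := measure_ball_pos volume (0 : EuclideanSpace ℝ (Fin (finrank ℝ V))) hρpos
  rw [hfinal] at this
  exact lt_irrefl 0 this


lemma image_single {i : Fin N} :
    v '' (({i} : Finset (Fin N)) : Set (Fin N)) = {v i} := by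
  rw [Finset.coe_singleton, Set.image_singleton]

end FacetAux

open FacetAux Module Submodule

/-- For `P ∈ 𝒫(v_1,…,v_N)` with `v_1,…,v_N` in general position, each face
`F(P,v_i) = P ∩ H(P,v_i)` is either a point or a facet; and if `n ≥ 3` and `F(P,v_i)`
is a facet, its outer unit normals within `H(P,v_i)` are in general position in
dimension `n-1`. -/
theorem face_point_or_facet (n N : ℕ) (hn : 2 ≤ n) (v : Fin N → Eucl n)
    (hgp : InGenPos n N v) (P : Set (Eucl n)) (hP : MemPolyClass v P) (i : Fin N) :
    ((∃ x : Eucl n, faceIn P (v i) = {x}) ∨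
      Module.finrank ℝ (vectorSpan ℝ (faceIn P (v i)))
        = Module.finrank ℝ (vectorSpan ℝ P) - 1) ∧
    (3 ≤ n → Module.finrank ℝ (vectorSpan ℝ (faceIn P (v i))) = n - 1 →
      (∀ w : Eucl n, ⟪w, v i⟫ = 0 → w ≠ 0 →
          ∃ u ∈ facetNormalsIn (v i) (faceIn P (v i)), ⟪u, w⟫ < 0) ∧
      (∀ s : Finset (Eucl n), (s : Set (Eucl n)) ⊆ facetNormalsIn (v i) (faceIn P (v i)) →
          s.card = n - 1 → LinearIndependent ℝ (fun x : s => (x : Eucl n)))) := by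
  constructor
  · -- point or facet
    rw [faceIn_eq_stdFace hP i]
    rcases stdFace_structure hgp hP {i} (stdFace_singleton_nonempty hP i) with
      ⟨x, hx⟩ | ⟨hVS, hfr, x, hxE, hstrict⟩
    · left; exact ⟨x, hx⟩
    · right
      have hfr1 : finrank ℝ (vectorSpan ℝ (stdFace v P {i})) = n - 1 := by
        have h1 := hfr (by rw [Finset.card_singleton]; omega)
        rwa [Finset.card_singleton] at h1
      rw [image_single] at hVS
      have hviP : v i ∈ vectorSpan ℝ P := by
        obtain ⟨ε, hεpos, hεmem⟩ := pert hP hxE.1 (-(v i)) (fun j hj => by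
          by_cases hji : j = i
          · subst hji
            rw [inner_neg_left, inner_self_vi hgp j]
            norm_num
          · exact absurd hj (ne_of_lt (hstrict j (by simpa using hji))))
        have h1 : x -ᵥ (x + ε • (-(v i))) ∈ vectorSpan ℝ P :=
          vsub_mem_vectorSpan ℝ hxE.1 hεmem
        have h2 : x -ᵥ (x + ε • (-(v i))) = ε • v i := by
          show x - (x + ε • (-(v i))) = ε • v i
          rw [smul_neg]
          abel
        rw [h2] at h1
        have h3 := Submodule.smul_mem (vectorSpan ℝ P) ε⁻¹ h1
        rwa [smul_smul, inv_mul_cancel₀ (ne_of_gt hεpos), one_smul] at h3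
      have horthP : (span ℝ ({v i} : Set (Eucl n)))ᗮ ≤ vectorSpan ℝ P := by
        have h3 : vectorSpan ℝ (stdFace v P {i}) ≤ vectorSpan ℝ P :=
          vectorSpan_mono ℝ (stdFace_subset _)
        rwa [hVS] at h3
      have htop : vectorSpan ℝ P = ⊤ := by
        rw [eq_top_iff]
        intro z _
        have hdecomp : z = (z - ⟪z, v i⟫ • v i) + ⟪z, v i⟫ • v i := by abel
        rw [hdecomp]
        refine Submodule.add_mem _ (horthP ?_) (Submodule.smul_mem _ _ hviP)
        rw [Submodule.mem_orthogonal_singleton_iff_inner_left, inner_sub_left,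
          real_inner_smul_left, inner_self_vi hgp i, mul_one, sub_self]
      rw [hfr1, htop, finrank_top, finrank_euclideanSpace_fin]
  · intro hn3 hface
    constructor
    · intro w hw0 hwne
      exact hemisphere_part hgp hP hn3 i hface w hw0 hwne
    · intro s hsub hscard
      classical
      have hrep : ∀ x : {u // u ∈ s}, ∃ j : Fin N, j ≠ i ∧ (stdFace v P {i, j}).Nonempty ∧
          finrank ℝ (vectorSpan ℝ (stdFace v P {i, j})) = n - 2 ∧
          (x : Eucl n) = ‖v j - ⟪v j, v i⟫ • v i‖⁻¹ • (v j - ⟪v j, v i⟫ • v i) :=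
        fun x => facet_normal_repr hgp hP hn3 i hface (hsub x.2)
      choose jf hjne hjnonempty hjdim hjrepr using hrep
      have hinj : Function.Injective jf := by
        intro a b hab
        have h1 : (a : Eucl n) = (b : Eucl n) := by rw [hjrepr a, hjrepr b, hab]
        exact Subtype.coe_injective h1
      set T : Finset (Fin N) := insert i (Finset.univ.image jf) with hT
      have hTcard : T.card ≤ n := by
        have h1 : (Finset.univ.image jf).card ≤ (Finset.univ : Finset {u // u ∈ s}).card :=
          Finset.card_image_le
        have h2 : (Finset.univ : Finset {u // u ∈ s}).card = s.card := by
          rw [Finset.card_univ, Fintype.card_coe]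
        have h3 : T.card ≤ (Finset.univ.image jf).card + 1 := Finset.card_insert_le _ _
        omega
      rw [Fintype.linearIndependent_iff]
      intro g hsum x₀
      obtain ⟨z, hz⟩ := phi_surj hgp T hTcard
        (fun k => if (k : Fin N) = jf x₀ then 1 else 0)
      have hzi : ⟪v i, z⟫ = 0 := by
        have h1 := hz ⟨i, Finset.mem_insert_self _ _⟩
        have hne' : i ≠ jf x₀ := Ne.symm (hjne x₀)
        simpa [hne'] using h1
      have hzx : ∀ x : {u // u ∈ s}, ⟪(x : Eucl n), z⟫ =
          (if x = x₀ then ‖v (jf x) - ⟪v (jf x), v i⟫ • v i‖⁻¹ else 0) := by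
        intro x
        have hjmem : jf x ∈ T :=
          Finset.mem_insert_of_mem (Finset.mem_image_of_mem jf (Finset.mem_univ x))
        have hzj : ⟪v (jf x), z⟫ = if jf x = jf x₀ then 1 else 0 := by
          simpa using hz ⟨jf x, hjmem⟩
        rw [hjrepr x, real_inner_smul_left, inner_sub_left, real_inner_smul_left, hzi,
          mul_zero, sub_zero, hzj]
        by_cases hxx : x = x₀
        · rw [if_pos hxx, if_pos (by rw [hxx]), mul_one]
        · rw [if_neg hxx, if_neg (fun h => hxx (hinj h)), mul_zero]
      have h0 : (∑ x : {u // u ∈ s}, ⟪g x • (x : Eucl n), z⟫) = 0 := by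
        rw [← sum_inner, hsum, inner_zero_left]
      have h2 : (∑ x : {u // u ∈ s}, ⟪g x • (x : Eucl n), z⟫)
          = g x₀ * ‖v (jf x₀) - ⟪v (jf x₀), v i⟫ • v i‖⁻¹ := by
        rw [Finset.sum_eq_single x₀]
        · rw [real_inner_smul_left, hzx x₀, if_pos rfl]
        · intro b _ hb
          rw [real_inner_smul_left, hzx b, if_neg hb, mul_zero]
        · intro h
          exact absurd (Finset.mem_univ x₀) h
      rw [h2] at h0
      have hnorm : ‖v (jf x₀) - ⟪v (jf x₀), v i⟫ • v i‖ ≠ 0 :=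
        norm_ne_zero_iff.mpr (pair_sub_ne_zero hgp (by omega) (hjne x₀))
      rcases mul_eq_zero.mp h0 with h | h
      · exact h
      · exact absurd h (inv_ne_zero hnorm)

end
end
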